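/- arXiv:1205.4414 — 12 statements merged into one kernel-verified Lean document; each statement's English description precedes it below -/
import Mathlib

section
/- Let A be an abelian group, Φ an injective endomorphism of A, w ≥ 1, and D = D• ∪ {0} where D• is a system of representatives of the residue classes of A modulo Φ^w(A) not contained in Φ(A). Define d : A → D by d(α) = 0 if α ∈ Φ(A) and d(α) ≡ α (mod Φ^w(A)) otherwise, and T : A → A by T(α) = Φ^{-1}(α − d(α)). Then an element α ∈ A has a D-w-NAF η_{ℓ−1}…η_0 (a word over D in which every factor of w consecutive letters contains at most one non-zero letter, whose value ∑_{j<ℓ} Φ^j(η_j) equals α) if and only if T^ℓ(α) = 0; in this case η_k = d(T^k(α)) for 0 ≤ k < ℓ. -/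
/-- Lemma 2.7: backwards division characterisation of `D`-`w`-NAFs. -/
theorem wnaf_backwards_division {A : Type*} [AddCommGroup A] (Φ : AddMonoid.End A)
    (hΦ : Function.Injective Φ) (w : ℕ) (hw : 1 ≤ w)
    (Dbul : Set A)
    (hDnot : ∀ δ ∈ Dbul, δ ∉ Set.range ⇑Φ)
    (hDrep : ∀ α : A, α ∉ Set.range ⇑Φ →
      ∃! δ, δ ∈ Dbul ∧ α - δ ∈ Set.range ⇑(Φ ^ w))
    (d : A → A)
    (hd0 : ∀ α ∈ Set.range ⇑Φ, d α = 0)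
    (hd : ∀ α : A, α ∉ Set.range ⇑Φ → d α ∈ Dbul ∧ α - d α ∈ Set.range ⇑(Φ ^ w))
    (T : A → A) (hT : ∀ α, Φ (T α) = α - d α)
    (α : A) (ℓ : ℕ) :
    ((∃ η : Fin ℓ → A, (∀ j, η j ∈ insert (0 : A) Dbul) ∧
        (∀ i j : Fin ℓ, (i : ℕ) < (j : ℕ) → (j : ℕ) < (i : ℕ) + w → η i ≠ 0 → η j = 0) ∧
        (∑ j : Fin ℓ, (Φ ^ (j : ℕ)) (η j)) = α) ↔ T^[ℓ] α = 0) ∧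
      (∀ η : Fin ℓ → A, (∀ j, η j ∈ insert (0 : A) Dbul) →
        (∀ i j : Fin ℓ, (i : ℕ) < (j : ℕ) → (j : ℕ) < (i : ℕ) + w → η i ≠ 0 → η j = 0) →
        (∑ j : Fin ℓ, (Φ ^ (j : ℕ)) (η j)) = α →
        ∀ k : Fin ℓ, η k = d (T^[(k : ℕ)] α)) := by
  -- basic facts
  have hTΦ : ∀ y : A, T (Φ y) = y := by
    intro y
    apply hΦ
    rw [hT, hd0 _ ⟨y, rfl⟩, sub_zero]
  have hpa : ∀ (k : ℕ) (x : A), (Φ ^ (k + 1)) x = Φ ((Φ ^ k) x) := by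
    intro k x
    rw [pow_succ']
    rfl
  -- key: d β ≠ 0 → for 1 ≤ t < w, d (T^[t] β) = 0
  have key : ∀ β : A, d β ≠ 0 → ∀ t, 1 ≤ t → t < w → d (T^[t] β) = 0 := by
    intro β hβ t ht1 htw
    have hβr : β ∉ Set.range ⇑Φ := fun h => hβ (hd0 β h)
    obtain ⟨γ, hγ⟩ := (hd β hβr).2
    have h1 : T β = (Φ ^ (w - 1)) γ := by
      apply hΦ
      rw [hT, ← hγ, ← hpa, show w - 1 + 1 = w by omega]
    have h2 : ∀ s, s ≤ w - 1 → T^[s + 1] β = (Φ ^ (w - 1 - s)) γ := by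
      intro s
      induction s with
      | zero => intro _; simpa using h1
      | succ n ih =>
        intro hn
        have hih := ih (by omega)
        rw [Function.iterate_succ_apply', hih]
        rw [show w - 1 - n = (w - 1 - (n + 1)) + 1 by omega, hpa, hTΦ]
    obtain ⟨s, rfl⟩ : ∃ s, t = s + 1 := ⟨t - 1, by omega⟩
    rw [h2 s (by omega)]
    apply hd0
    exact ⟨(Φ ^ (w - 1 - s - 1)) γ, by
      rw [← hpa, show w - 1 - s - 1 + 1 = w - 1 - s by omega]⟩
  -- value of the constructed digit string
  have sumA : ∀ m (β : A), T^[m] β = 0 →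
      (∑ j : Fin m, (Φ ^ (j : ℕ)) (d (T^[(j : ℕ)] β))) = β := by
    intro m
    induction m with
    | zero => intro β h; simpa using h.symm
    | succ n ih =>
      intro β h
      rw [Fin.sum_univ_succ]
      have hterm : ∀ j : Fin n, (Φ ^ ((j.succ : ℕ))) (d (T^[(j.succ : ℕ)] β))
          = Φ ((Φ ^ (j : ℕ)) (d (T^[(j : ℕ)] (T β)))) := by
        intro j
        rw [Fin.val_succ, Function.iterate_succ_apply, hpa]
      rw [Finset.sum_congr rfl (fun j _ => hterm j), ← map_sum,
        ih (T β) (by rwa [← Function.iterate_succ_apply]), hT]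
      simp
  -- uniqueness / forward direction
  have lemB : ∀ m (β : A), ∀ η : Fin m → A, (∀ j, η j ∈ insert (0 : A) Dbul) →
      (∀ i j : Fin m, (i : ℕ) < (j : ℕ) → (j : ℕ) < (i : ℕ) + w → η i ≠ 0 → η j = 0) →
      (∑ j : Fin m, (Φ ^ (j : ℕ)) (η j)) = β →
      (∀ k : Fin m, η k = d (T^[(k : ℕ)] β)) ∧ T^[m] β = 0 := by
    intro m
    induction m with
    | zero =>
      intro β η _ _ hsum
      exact ⟨fun k => k.elim0, by simpa using hsum.symm⟩
    | succ n ih =>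
      intro β η hmem hnaf hsum
      set S := ∑ j : Fin n, (Φ ^ (j : ℕ)) (η j.succ) with hS
      have hβeq : β = η 0 + Φ S := by
        have hterm : ∀ j : Fin n, (Φ ^ (j.succ : ℕ)) (η j.succ)
            = Φ ((Φ ^ (j : ℕ)) (η j.succ)) := fun j => by rw [Fin.val_succ, hpa]
        rw [← hsum, Fin.sum_univ_succ, Finset.sum_congr rfl fun j _ => hterm j,
          ← map_sum, ← hS]
        simp
      have hη0 : η 0 = d β := by
        by_cases h0 : η 0 = 0
        · rw [h0, hd0 β ⟨S, by rw [hβeq, h0, zero_add]⟩]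
        · have hη0D : η 0 ∈ Dbul := (hmem 0).resolve_left h0
          have hβn : β ∉ Set.range ⇑Φ := by
            rintro ⟨y, hy⟩
            exact hDnot _ hη0D ⟨y - S, by rw [map_sub, hy, hβeq]; abel⟩
          have hrw : β - η 0 ∈ Set.range ⇑(Φ ^ w) := by
            have hβS : β - η 0 = Φ S := by rw [hβeq]; abel
            rw [hβS]
            refine ⟨∑ j : Fin n, if (j : ℕ) + 1 < w then 0
              else (Φ ^ ((j : ℕ) + 1 - w)) (η j.succ), ?_⟩
            rw [map_sum, hS, map_sum]
            refine Finset.sum_congr rfl fun j _ => ?_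
            by_cases hj : (j : ℕ) + 1 < w
            · have hz : η j.succ = 0 :=
                hnaf 0 j.succ (by simp) (by simpa using hj) h0
              simp [hj, hz]
            · rw [if_neg hj]
              have hpow : Φ ^ w * Φ ^ ((j : ℕ) + 1 - w) = Φ ^ ((j : ℕ) + 1) := by
                rw [← pow_add]
                congr 1
                omega
              calc (Φ ^ w) ((Φ ^ ((j : ℕ) + 1 - w)) (η j.succ))
                  = (Φ ^ w * Φ ^ ((j : ℕ) + 1 - w)) (η j.succ) := rfl
                _ = (Φ ^ ((j : ℕ) + 1)) (η j.succ) := by rw [hpow]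
                _ = Φ ((Φ ^ (j : ℕ)) (η j.succ)) := hpa _ _
          obtain ⟨δ, hδ, huniq⟩ := hDrep β hβn
          rw [huniq (η 0) ⟨hη0D, hrw⟩, huniq (d β) (hd β hβn)]
      have hTβ : T β = S := by
        apply hΦ
        rw [hT, ← hη0, hβeq]
        abel
      have hIH := ih (T β) (fun j => η j.succ) (fun j => hmem j.succ)
        (fun i j hij hjw hi => hnaf i.succ j.succ
          (by simpa using hij) (by simp only [Fin.val_succ]; omega) hi)
        (by rw [hTβ])
      refine ⟨?_, by rw [Function.iterate_succ_apply]; exact hIH.2⟩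
      intro k
      refine Fin.cases ?_ ?_ k
      · simpa using hη0
      · intro i
        have h := hIH.1 i
        rw [Fin.val_succ, Function.iterate_succ_apply]
        exact h
  constructor
  · constructor
    · rintro ⟨η, hmem, hnaf, hsum⟩
      exact (lemB ℓ α η hmem hnaf hsum).2
    · intro h0
      refine ⟨fun j => d (T^[(j : ℕ)] α), ?_, ?_, sumA ℓ α h0⟩
      · intro j
        by_cases hj : T^[(j : ℕ)] α ∈ Set.range ⇑Φ
        · exact Or.inl (hd0 _ hj)
        · exact Or.inr (hd _ hj).1
      · intro i j hij hjw hi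
        show d (T^[(j : ℕ)] α) = 0
        rw [show (j : ℕ) = ((j : ℕ) - (i : ℕ)) + (i : ℕ) by omega,
          Function.iterate_add_apply]
        exact key _ hi _ (by omega) (by omega)
  · intro η hmem hnaf hsum k
    exact (lemB ℓ α η hmem hnaf hsum).1 k
end

section
/- With the setup of a pre-w-NADS (A, Φ, D) and the maps d and T as above, the D-w-NAF of an element α ∈ A, if it exists, is unique up to leading zeros. -/
/-!
The first digit of a `w`-NAF of `α` is determined by `α`: it is `0` exactly when
`α ∈ Φ(A)`, and otherwise the NAF condition kills the next `w - 1` digits, so the first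
digit is the representative in `D•` of `α` modulo `Φ^w(A)`. Subtracting it and cancelling
the injective `Φ` leaves two `w`-NAFs of one element, one digit shorter.
-/

namespace WNAF

variable {A : Type*} [AddCommGroup A]

def NonAdjacent (w : ℕ) (η : ℕ → A) : Prop :=
  ∀ i j : ℕ, i < j → j < i + w → η i ≠ 0 → η j = 0

lemma NonAdjacent.shift {w : ℕ} {η : ℕ → A} (h : NonAdjacent w η) :
    NonAdjacent w (fun n => η (n + 1)) :=
  fun i j hij hjw => h (i + 1) (j + 1) (by omega) (by omega)

variable (Φ : AddMonoid.End A)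

def evalDigits (η : ℕ → A) (N : ℕ) : A :=
  ∑ j ∈ Finset.range N, (Φ ^ j) (η j)

lemma evalDigits_succ (η : ℕ → A) (N : ℕ) :
    evalDigits Φ η (N + 1) = η 0 + Φ (evalDigits Φ (fun n => η (n + 1)) N) := by
  simp only [evalDigits, Finset.sum_range_succ', map_sum, pow_succ', AddMonoid.End.coe_mul,
    Function.comp_apply, pow_zero, AddMonoid.End.one_apply, add_comm]

lemma evalDigits_eq_of_le {η : ℕ → A} {ℓ N : ℕ} (hη : ∀ j, ℓ ≤ j → η j = 0) (hℓN : ℓ ≤ N) :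
    evalDigits Φ η ℓ = evalDigits Φ η N :=
  Finset.sum_subset (Finset.range_subset_range.mpr hℓN) fun j hjN hjℓ => by
    rw [hη j (by simpa using hjℓ), map_zero]

lemma pow_apply_mem_range_pow {j k : ℕ} (hkj : k ≤ j) (x : A) :
    (Φ ^ j) x ∈ (Φ ^ k).range :=
  ⟨(Φ ^ (j - k)) x, by rw [← pow_mul_pow_sub Φ hkj]; rfl⟩

lemma evalDigits_succ_sub_head_mem_range_pow {η : ℕ → A} {k : ℕ}
    (hη : ∀ j, 0 < j → j < k → η j = 0) (N : ℕ) :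
    evalDigits Φ η (N + 1) - η 0 ∈ (Φ ^ k).range := by
  rw [evalDigits, Finset.sum_range_succ', pow_zero, AddMonoid.End.one_apply, add_sub_cancel_right]
  refine AddSubgroup.sum_mem _ fun j _ => ?_
  rcases lt_or_ge (j + 1) k with hjk | hkj
  · rw [hη (j + 1) j.succ_pos hjk, map_zero]
    exact zero_mem _
  · exact pow_apply_mem_range_pow Φ hkj _

lemma evalDigits_succ_sub_head_mem_range (η : ℕ → A) (N : ℕ) :
    evalDigits Φ η (N + 1) - η 0 ∈ Set.range ⇑Φ := by
  have h := evalDigits_succ_sub_head_mem_range_pow Φ (η := η) (k := 1) (by omega) N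
  rw [pow_one] at h
  exact h

variable {D : Set A}

lemma head_eq_zero_iff (hDnot : ∀ δ ∈ D, δ ∉ Set.range ⇑Φ) {η : ℕ → A}
    (hηD : ∀ j, η j ∈ insert (0 : A) D) (N : ℕ) :
    η 0 = 0 ↔ evalDigits Φ η (N + 1) ∈ Set.range ⇑Φ := by
  have htail := evalDigits_succ_sub_head_mem_range Φ η N
  constructor
  · intro h0
    simpa [h0] using htail
  · intro hα
    refine (hηD 0).resolve_right fun hD => hDnot _ hD ?_
    have h := Φ.range.sub_mem hα htail
    rw [sub_sub_cancel] at h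
    exact h

lemma head_eq_of_evalDigits_eq {w : ℕ} (hDnot : ∀ δ ∈ D, δ ∉ Set.range ⇑Φ)
    (hDrep : ∀ α : A, α ∉ Set.range ⇑Φ → ∃! δ, δ ∈ D ∧ α - δ ∈ Set.range ⇑(Φ ^ w))
    {η ξ : ℕ → A} (hηD : ∀ j, η j ∈ insert (0 : A) D) (hξD : ∀ j, ξ j ∈ insert (0 : A) D)
    (hη : NonAdjacent w η) (hξ : NonAdjacent w ξ) {N : ℕ}
    (heq : evalDigits Φ η (N + 1) = evalDigits Φ ξ (N + 1)) :
    η 0 = ξ 0 := by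
  have hηzero := head_eq_zero_iff Φ hDnot hηD N
  have hξzero := head_eq_zero_iff Φ hDnot hξD N
  rw [← heq] at hξzero
  by_cases hη0 : η 0 = 0
  · rw [hη0, hξzero.mpr (hηzero.mp hη0)]
  have hξ0 : ξ 0 ≠ 0 := by rwa [Ne, hξzero, ← hηzero]
  have hrep {θ : ℕ → A} (hθD : ∀ j, θ j ∈ insert (0 : A) D) (hθ : NonAdjacent w θ)
      (hθ0 : θ 0 ≠ 0) : θ 0 ∈ D ∧ evalDigits Φ θ (N + 1) - θ 0 ∈ Set.range ⇑(Φ ^ w) :=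
    ⟨(hθD 0).resolve_left hθ0,
      evalDigits_succ_sub_head_mem_range_pow Φ (fun j hj hjw => hθ 0 j hj (by omega) hθ0) N⟩
  refine (hDrep _ (mt hηzero.mpr hη0)).unique (hrep hηD hη hη0) ?_
  rw [heq]
  exact hrep hξD hξ hξ0

theorem eq_of_evalDigits_eq (hΦ : Function.Injective Φ) {w : ℕ}
    (hDnot : ∀ δ ∈ D, δ ∉ Set.range ⇑Φ)
    (hDrep : ∀ α : A, α ∉ Set.range ⇑Φ → ∃! δ, δ ∈ D ∧ α - δ ∈ Set.range ⇑(Φ ^ w))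
    {η ξ : ℕ → A} (hηD : ∀ j, η j ∈ insert (0 : A) D) (hξD : ∀ j, ξ j ∈ insert (0 : A) D)
    (hη : NonAdjacent w η) (hξ : NonAdjacent w ξ) {N : ℕ}
    (heq : evalDigits Φ η N = evalDigits Φ ξ N) :
    ∀ j < N, η j = ξ j := by
  induction N generalizing η ξ with
  | zero => intro j hj; omega
  | succ N ih =>
    have hhead := head_eq_of_evalDigits_eq Φ hDnot hDrep hηD hξD hη hξ heq
    rw [evalDigits_succ, evalDigits_succ, hhead] at heq
    have htail := ih (fun j => hηD (j + 1)) (fun j => hξD (j + 1)) hη.shift hξ.shift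
      (hΦ (add_left_cancel heq))
    rintro (_ | j) hj
    · exact hhead
    · exact htail j (by omega)

end WNAF

open WNAF in
/-- Words are digit sequences `ℕ → A` vanishing from some index on, so that equality up to
leading zeros is equality of sequences. -/
theorem wnaf_unique_general {A : Type*} [AddCommGroup A] (Φ : AddMonoid.End A)
    (hΦ : Function.Injective Φ) (w : ℕ)
    (Dbul : Set A)
    (hDnot : ∀ δ ∈ Dbul, δ ∉ Set.range ⇑Φ)
    (hDrep : ∀ α : A, α ∉ Set.range ⇑Φ →
      ∃! δ, δ ∈ Dbul ∧ α - δ ∈ Set.range ⇑(Φ ^ w))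
    (α : A) (η ξ : ℕ → A) (ℓ ℓ' : ℕ)
    (hηD : ∀ j, η j ∈ insert (0 : A) Dbul)
    (hξD : ∀ j, ξ j ∈ insert (0 : A) Dbul)
    (hηNAF : ∀ i j : ℕ, i < j → j < i + w → η i ≠ 0 → η j = 0)
    (hξNAF : ∀ i j : ℕ, i < j → j < i + w → ξ i ≠ 0 → ξ j = 0)
    (hηfin : ∀ j, ℓ ≤ j → η j = 0)
    (hξfin : ∀ j, ℓ' ≤ j → ξ j = 0)
    (hηval : ∑ j ∈ Finset.range ℓ, (Φ ^ j) (η j) = α)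
    (hξval : ∑ j ∈ Finset.range ℓ', (Φ ^ j) (ξ j) = α) :
    η = ξ := by
  have heq : evalDigits Φ η (max ℓ ℓ') = evalDigits Φ ξ (max ℓ ℓ') := by
    rw [← evalDigits_eq_of_le Φ hηfin (le_max_left ℓ ℓ'),
      ← evalDigits_eq_of_le Φ hξfin (le_max_right ℓ ℓ')]
    exact hηval.trans hξval.symm
  funext j
  by_cases hj : j < max ℓ ℓ'
  · exact eq_of_evalDigits_eq Φ hΦ hDnot hDrep hηD hξD hηNAF hξNAF heq j hj
  · rw [hηfin j (by omega), hξfin j (by omega)]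

/-- Uniqueness (up to leading zeros) of the `D`-`w`-NAF of an element: two
`D`-`w`-NAF expansions of the same element, written as digit sequences
`ℕ → A` with finitely many non-zero digits (so that padding by leading zeros
is built in), coincide. -/
theorem wnaf_unique {A : Type*} [AddCommGroup A] (Φ : AddMonoid.End A)
    (hΦ : Function.Injective Φ) (w : ℕ) (hw : 1 ≤ w)
    (Dbul : Set A)
    (hDnot : ∀ δ ∈ Dbul, δ ∉ Set.range ⇑Φ)
    (hDrep : ∀ α : A, α ∉ Set.range ⇑Φ →
      ∃! δ, δ ∈ Dbul ∧ α - δ ∈ Set.range ⇑(Φ ^ w))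
    (d : A → A)
    (hd0 : ∀ α ∈ Set.range ⇑Φ, d α = 0)
    (hd : ∀ α : A, α ∉ Set.range ⇑Φ → d α ∈ Dbul ∧ α - d α ∈ Set.range ⇑(Φ ^ w))
    (T : A → A) (hT : ∀ α, Φ (T α) = α - d α)
    (α : A) (η ξ : ℕ → A) (ℓ ℓ' : ℕ)
    (hηD : ∀ j, η j ∈ insert (0 : A) Dbul)
    (hξD : ∀ j, ξ j ∈ insert (0 : A) Dbul)
    (hηNAF : ∀ i j : ℕ, i < j → j < i + w → η i ≠ 0 → η j = 0)
    (hξNAF : ∀ i j : ℕ, i < j → j < i + w → ξ i ≠ 0 → ξ j = 0)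
    (hηfin : ∀ j, ℓ ≤ j → η j = 0)
    (hξfin : ∀ j, ℓ' ≤ j → ξ j = 0)
    (hηval : ∑ j ∈ Finset.range ℓ, (Φ ^ j) (η j) = α)
    (hξval : ∑ j ∈ Finset.range ℓ', (Φ ^ j) (ξ j) = α) :
    η = ξ :=
  wnaf_unique_general Φ hΦ w Dbul hDnot hDrep α η ξ ℓ ℓ' hηD hξD hηNAF hξNAF hηfin hξfin hηval hξval
end

section
/- Let Λ ⊆ ℝ^n be a lattice (full-rank discrete subgroup) and Φ an injective linear endomorphism of ℝ^n with Φ(Λ) ⊆ Λ. If Φ has an eigenvalue λ (over ℂ) with |λ| < 1, then there exists α ∈ Λ that is not the value of any word over any finite digit set D ⊆ Λ; in particular D is not a w-NADS. -/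
/-!
A complex root `μ` of the characteristic polynomial of `Φ` is an eigenvalue of the transpose of
its matrix, and a left eigenvector `v` gives a nonzero `ℝ`-linear functional `f : E → ℂ` with
`f ∘ Φ = μ • f`. On the value of a word over `D` this functional is bounded by the geometric series
`(∑ d ∈ D, ‖f d‖) / (1 - ‖μ‖)`, whereas on the lattice it is unbounded, since it does not vanish
on some basis vector `b i` and `‖f (k • b i)‖ = k ‖f (b i)‖`.
-/

open Matrix

theorem Matrix.exists_vecMul_eq_smul_of_isRoot_charpoly {K n : Type*} [Field K] [Fintype n]
    [DecidableEq n] (M : Matrix n n K) {μ : K} (hμ : M.charpoly.IsRoot μ) :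
    ∃ v ≠ 0, v ᵥ* M = μ • v := by
  rw [← charpoly_transpose, ← charpoly_toLin', ← Module.End.hasEigenvalue_iff_isRoot_charpoly]
    at hμ
  obtain ⟨v, hv⟩ := hμ.exists_hasEigenvector
  exact ⟨v, hv.2, by simpa [← Matrix.mulVec_transpose] using hv.apply_eq_smul⟩

theorem LinearMap.exists_functional_ne_zero_apply_eq_mul_of_isRoot_charpoly
    {E : Type*} [AddCommGroup E] [Module ℝ E] [FiniteDimensional ℝ E] (Φ : E →ₗ[ℝ] E) {μ : ℂ}
    (hμ : (Φ.charpoly.map (algebraMap ℝ ℂ)).IsRoot μ) :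
    ∃ f : E →ₗ[ℝ] ℂ, f ≠ 0 ∧ ∀ x, f (Φ x) = μ * f x := by
  let b := Module.finBasis ℝ E
  let A := LinearMap.toMatrix b b Φ
  rw [← LinearMap.charpoly_toMatrix Φ b, ← Matrix.charpoly_map] at hμ
  obtain ⟨v, hv0, hv⟩ := (A.map (algebraMap ℝ ℂ)).exists_vecMul_eq_smul_of_isRoot_charpoly hμ
  let f : E →ₗ[ℝ] ℂ :=
    dotProductBilin ℝ ℝ v ∘ₗ LinearMap.compLeft Complex.ofRealAm.toLinearMap _ ∘ₗ
      b.equivFun.toLinearMap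
  have hf : ∀ x, f x = v ⬝ᵥ (algebraMap ℝ ℂ ∘ b.repr x) := fun x => rfl
  refine ⟨f, fun h => hv0 ?_, fun x => ?_⟩
  · ext i
    simpa [hf, Function.comp_def, Finsupp.single_apply, dotProduct, apply_ite Complex.ofReal]
      using LinearMap.congr_fun h (b i)
  · rw [hf, hf, ← LinearMap.toMatrix_mulVec_repr b b]
    have hA : algebraMap ℝ ℂ ∘ (A *ᵥ b.repr x) =
        A.map (algebraMap ℝ ℂ) *ᵥ (algebraMap ℝ ℂ ∘ b.repr x) :=
      funext (RingHom.map_mulVec _ A _)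
    rw [hA, dotProduct_mulVec, hv, smul_dotProduct, smul_eq_mul]

theorem LinearMap.apply_pow_apply_of_apply_eq_mul {E : Type*} [AddCommGroup E] [Module ℝ E]
    {Φ : E →ₗ[ℝ] E} {f : E →ₗ[ℝ] ℂ} {μ : ℂ} (hf : ∀ x, f (Φ x) = μ * f x) (k : ℕ) (x : E) :
    f ((Φ ^ k) x) = μ ^ k * f x := by
  induction k generalizing x with
  | zero => simp
  | succ k ih => rw [pow_succ, Module.End.mul_apply, ih, hf, pow_succ, mul_assoc]

theorem norm_apply_sum_pow_apply_le {E : Type*} [AddCommGroup E] [Module ℝ E]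
    {Φ : E →ₗ[ℝ] E} {f : E →ₗ[ℝ] ℂ} {μ : ℂ} (hf : ∀ x, f (Φ x) = μ * f x) (hμ : ‖μ‖ < 1)
    (D : Finset E) {ℓ : ℕ} (η : Fin ℓ → E) (hη : ∀ j, η j ∈ D) :
    ‖f (∑ j : Fin ℓ, (Φ ^ (j : ℕ)) (η j))‖ ≤ (∑ d ∈ D, ‖f d‖) / (1 - ‖μ‖) := by
  set M := ∑ d ∈ D, ‖f d‖
  have hM : ∀ j, ‖f (η j)‖ ≤ M := fun j =>
    Finset.single_le_sum (fun d _ => norm_nonneg (f d)) (hη j)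
  calc ‖f (∑ j : Fin ℓ, (Φ ^ (j : ℕ)) (η j))‖
      ≤ ∑ j : Fin ℓ, ‖μ‖ ^ (j : ℕ) * M := by
        rw [map_sum]
        refine (norm_sum_le _ _).trans (Finset.sum_le_sum fun j _ => ?_)
        rw [LinearMap.apply_pow_apply_of_apply_eq_mul hf, norm_mul, norm_pow]
        exact mul_le_mul_of_nonneg_left (hM j) (by positivity)
    _ = (∑ j ∈ Finset.Ico 0 ℓ, ‖μ‖ ^ j) * M := by
        rw [Finset.sum_mul, Fin.sum_univ_eq_sum_range (fun j => ‖μ‖ ^ j * M), Finset.range_eq_Ico]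
    _ ≤ ‖μ‖ ^ 0 / (1 - ‖μ‖) * M := by
        gcongr
        exact geom_sum_Ico_le_of_lt_one (norm_nonneg μ) hμ
    _ = M / (1 - ‖μ‖) := by ring

theorem Module.Basis.exists_mem_span_int_lt_norm {E ι : Type*} [AddCommGroup E] [Module ℝ E]
    (b : Module.Basis ι ℝ E) {f : E →ₗ[ℝ] ℂ} (hf : f ≠ 0) (B : ℝ) :
    ∃ a ∈ Submodule.span ℤ (Set.range b), B < ‖f a‖ := by
  obtain ⟨i, hi⟩ : ∃ i, f (b i) ≠ 0 := by
    by_contra! h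
    exact hf (b.ext fun i => by simp [h i])
  obtain ⟨k, hk⟩ := exists_nat_gt (B / ‖f (b i)‖)
  refine ⟨k • b i, nsmul_mem (Submodule.subset_span (Set.mem_range_self i)) k, ?_⟩
  rwa [map_nsmul, nsmul_eq_mul, norm_mul, Complex.norm_natCast, ← div_lt_iff₀ (norm_pos_iff.2 hi)]

theorem no_representation_of_contracting_eigenvalue_general
    {E : Type*} [NormedAddCommGroup E] [NormedSpace ℝ E] [FiniteDimensional ℝ E]
    {n : ℕ} (b : Module.Basis (Fin n) ℝ E)
    (Λ : Set E) (hΛ : Λ = ↑(Submodule.span ℤ (Set.range ⇑b)))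
    (Φ : E →ₗ[ℝ] E)
    (hlam : ∃ lam : ℂ, ‖lam‖ < 1 ∧
      (Polynomial.map (algebraMap ℝ ℂ) (LinearMap.charpoly Φ)).IsRoot lam) :
    ∀ D : Finset E, ↑D ⊆ Λ →
      ∃ α ∈ Λ, ∀ (ℓ : ℕ) (η : Fin ℓ → E), (∀ j, η j ∈ D) →
        (∑ j : Fin ℓ, (Φ ^ (j : ℕ)) (η j)) ≠ α := by
  intro D _
  obtain ⟨μ, hμ, hroot⟩ := hlam
  obtain ⟨f, hf0, hfΦ⟩ := Φ.exists_functional_ne_zero_apply_eq_mul_of_isRoot_charpoly hroot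
  obtain ⟨α, hαΛ, hα⟩ := b.exists_mem_span_int_lt_norm hf0 ((∑ d ∈ D, ‖f d‖) / (1 - ‖μ‖))
  refine ⟨α, hΛ ▸ hαΛ, fun ℓ η hη hval => ?_⟩
  have := norm_apply_sum_pow_apply_le hfΦ hμ D η hη
  rw [hval] at this
  exact this.not_gt hα

/-- If an injective endomorphism of `ℝ^n` preserving a full-rank lattice `Λ`
has a complex eigenvalue of absolute value `< 1`, then some lattice element is
not the value of any word over any finite digit set `D ⊆ Λ`. -/
theorem no_representation_of_contracting_eigenvalue
    {E : Type*} [NormedAddCommGroup E] [NormedSpace ℝ E] [FiniteDimensional ℝ E]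
    {n : ℕ} (b : Module.Basis (Fin n) ℝ E)
    (Λ : Set E) (hΛ : Λ = ↑(Submodule.span ℤ (Set.range ⇑b)))
    (Φ : E →ₗ[ℝ] E) (hΦinj : Function.Injective Φ)
    (hΦΛ : ∀ x ∈ Λ, Φ x ∈ Λ)
    (hlam : ∃ lam : ℂ, ‖lam‖ < 1 ∧
      (Polynomial.map (algebraMap ℝ ℂ) (LinearMap.charpoly Φ)).IsRoot lam) :
    ∀ D : Finset E, ↑D ⊆ Λ →
      ∃ α ∈ Λ, ∀ (ℓ : ℕ) (η : Fin ℓ → E), (∀ j, η j ∈ D) →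
        (∑ j : Fin ℓ, (Φ ^ (j : ℕ)) (η j)) ≠ α :=
  no_representation_of_contracting_eigenvalue_general b Λ hΛ Φ hlam
end

section
/- Let Λ ⊆ ℝ^n be a lattice and Φ an injective linear endomorphism of ℝ^n with Φ(Λ) ⊆ Λ, and let D be a digit set for (Λ, Φ, w) as in a pre-w-NADS. If D is a w-NADS, i.e., every element of Λ admits a D-w-NAF, then Φ is expanding: every complex eigenvalue λ of Φ satisfies |λ| > 1. -/
/-!
The digit set is finite: distinct digits are incongruent modulo the sublattice `Φ^w(Λ)`, which
has finite index. If `Φ` had an eigenvalue `μ` with `‖μ‖ < 1`, a left eigenvector would give a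
functional `f` with `f ∘ Φ = μ • f`; it is bounded on the values of all digit expansions by a
geometric series, yet unbounded on `Λ`. If `‖λ‖ = 1`, then `λ` is an algebraic integer whose
conjugates are eigenvalues as well, hence of modulus at least `1`, so by Kronecker's theorem
`λ ^ N = 1`, and `Φ^N` fixes a nonzero lattice point `z`. Then `z ∈ Φ^m(Λ)` for every `m`,
and since no nonzero digit lies in `Φ(Λ)`, peeling off the lowest digit of an expansion of `z`
again and again shows `z = 0`.
-/

open Polynomial Matrix IntermediateField

section DigitExpansion

variable {R E : Type*} [Semiring R] [AddCommGroup E] [Module R E]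

def expansionValue (Φ : Module.End R E) {ℓ : ℕ} (η : Fin ℓ → E) : E :=
  ∑ j : Fin ℓ, (Φ ^ (j : ℕ)) (η j)

theorem expansionValue_succ (Φ : Module.End R E) {ℓ : ℕ} (η : Fin (ℓ + 1) → E) :
    expansionValue Φ η = η 0 + Φ (expansionValue Φ (Fin.tail η)) := by
  simp only [expansionValue, Fin.sum_univ_succ, Fin.val_zero, pow_zero, Module.End.one_apply,
    map_sum, Fin.val_succ, pow_succ', Module.End.mul_apply, Fin.tail]

variable {Φ : Module.End R E} {Λ : Submodule ℤ E}

theorem Module.End.pow_apply_mem_of_mapsTo {S : Set E} (hΦS : Set.MapsTo Φ S S) (k : ℕ) {x : E}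
    (hx : x ∈ S) : (Φ ^ k) x ∈ S := by
  rw [Module.End.coe_pow]
  exact hΦS.iterate k hx

theorem expansionValue_mem (hΦΛ : Set.MapsTo Φ Λ Λ) {ℓ : ℕ} {η : Fin ℓ → E}
    (hη : ∀ j, η j ∈ Λ) : expansionValue Φ η ∈ Λ :=
  Λ.sum_mem fun j _ => Module.End.pow_apply_mem_of_mapsTo hΦΛ j (hη j)

theorem head_mem_image_of_expansionValue_mem (hΦΛ : Set.MapsTo Φ Λ Λ) {ℓ : ℕ}
    {η : Fin (ℓ + 1) → E} (hη : ∀ j, η j ∈ Λ) (h : expansionValue Φ η ∈ Φ '' Λ) :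
    η 0 ∈ Φ '' Λ := by
  obtain ⟨x, hx, hxη⟩ := h
  refine ⟨x - expansionValue Φ (Fin.tail η),
    Λ.sub_mem hx (expansionValue_mem hΦΛ fun j => hη j.succ), ?_⟩
  rw [map_sub, hxη, expansionValue_succ, add_sub_cancel_right]

theorem expansionValue_eq_zero_of_forall_mem_image_pow (hΦinj : Function.Injective Φ)
    (hΦΛ : Set.MapsTo Φ Λ Λ) {D : Set E} (hDΛ : D ⊆ Λ) (hD : ∀ δ ∈ D, δ ∉ Φ '' Λ) {ℓ : ℕ}
    {η : Fin ℓ → E} (hη : ∀ j, η j ∈ insert 0 D)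
    (h : ∀ m : ℕ, expansionValue Φ η ∈ (Φ ^ m) '' Λ) : expansionValue Φ η = 0 := by
  induction ℓ with
  | zero => simp [expansionValue]
  | succ ℓ ih =>
    have hηΛ : ∀ j, η j ∈ Λ := fun j =>
      (hη j).elim (fun h0 => h0 ▸ Λ.zero_mem) fun hd => hDΛ hd
    have hhead : η 0 = 0 := by
      refine (hη 0).resolve_right fun hd => hD _ hd ?_
      refine head_mem_image_of_expansionValue_mem hΦΛ hηΛ ?_
      simpa using h 1
    have htail : expansionValue Φ (Fin.tail η) = 0 := by
      refine ih (fun j => hη j.succ) fun m => ?_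
      obtain ⟨x, hx, hxη⟩ := h (m + 1)
      refine ⟨x, hx, hΦinj ?_⟩
      rw [← Module.End.mul_apply, ← pow_succ', hxη, expansionValue_succ, hhead, zero_add]
    rw [expansionValue_succ, hhead, htail, map_zero, add_zero]

theorem mem_image_pow_of_pow_apply_eq_self (hΦΛ : Set.MapsTo Φ Λ Λ) {N : ℕ} (hN : 0 < N)
    {z : E} (hz : z ∈ Λ) (hfix : (Φ ^ N) z = z) (m : ℕ) : z ∈ (Φ ^ m) '' Λ := by
  have hfix' : (Φ ^ (N * m)) z = z := by
    rw [pow_mul, Module.End.coe_pow, Function.iterate_fixed hfix]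
  refine ⟨(Φ ^ (N * m - m)) z, Module.End.pow_apply_mem_of_mapsTo hΦΛ _ hz, ?_⟩
  rw [← Module.End.mul_apply, ← pow_add, Nat.add_sub_cancel' (Nat.le_mul_of_pos_left m hN), hfix']

end DigitExpansion

theorem Set.finite_of_existsUnique_sub_mem_image {E : Type*} [AddCommGroup E]
    {Λ : Submodule ℤ E} [Module.Free ℤ Λ] [Module.Finite ℤ Λ] {T : E →+ E}
    (hT : Function.Injective T) (hTΛ : Set.MapsTo T Λ Λ) {D : Set E} (hDΛ : D ⊆ Λ)
    (hD : ∀ δ ∈ D, ∃! δ', δ' ∈ D ∧ δ - δ' ∈ T '' Λ) : D.Finite := by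
  let ψ : Λ →ₗ[ℤ] Λ := T.toIntLinearMap.restrict hTΛ
  have hψ : Function.Injective ψ := fun x y hxy =>
    Subtype.ext (hT (congrArg Subtype.val hxy))
  have : Finite (Λ ⧸ LinearMap.range ψ) :=
    Submodule.finiteQuotientOfFreeOfRankEq _ (LinearMap.finrank_range_of_inj hψ)
  let residue : D → Λ ⧸ LinearMap.range ψ := fun δ => Submodule.Quotient.mk ⟨δ, hDΛ δ.2⟩
  have hresidue : Function.Injective residue := by
    rintro ⟨δ₁, h₁⟩ ⟨δ₂, h₂⟩ h
    obtain ⟨x, hx⟩ := (Submodule.Quotient.eq _).mp h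
    refine Subtype.ext ((hD δ₁ h₁).unique ⟨h₁, ?_⟩ ⟨h₂, x, x.2, congrArg Subtype.val hx⟩)
    exact ⟨0, Λ.zero_mem, by rw [map_zero, sub_self]⟩
  have : Finite D := Finite.of_injective residue hresidue
  exact Set.toFinite D

theorem Module.End.exists_eigenfunctional {E : Type*} [AddCommGroup E] [Module ℝ E]
    [FiniteDimensional ℝ E] (Φ : Module.End ℝ E) {μ : ℂ}
    (hμ : ((LinearMap.charpoly Φ).map (algebraMap ℝ ℂ)).IsRoot μ) :
    ∃ f : E →ₗ[ℝ] ℂ, f ≠ 0 ∧ ∀ x, f (Φ x) = μ * f x := by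
  classical
  let b := Module.finBasis ℝ E
  let M := (LinearMap.toMatrix b b Φ).map Complex.ofRealHom
  have hdet : (Matrix.scalar _ μ - M).det = 0 := by
    rw [← Matrix.eval_charpoly, Matrix.charpoly_map, LinearMap.charpoly_toMatrix]
    exact hμ
  obtain ⟨v, hv0, hv⟩ := Matrix.exists_vecMul_eq_zero_iff.mpr hdet
  have hvM : v ᵥ* M = μ • v := by
    rw [Matrix.vecMul_sub, sub_eq_zero, Matrix.scalar_apply] at hv
    rw [← hv]
    ext i
    simp [Matrix.vecMul_diagonal, mul_comm]
  let f : E →ₗ[ℝ] ℂ := ∑ i, v i • (Complex.ofRealLI.toLinearMap ∘ₗ b.coord i)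
  have hf : ∀ x, f x = v ⬝ᵥ (Complex.ofRealHom ∘ b.repr x) := fun x => by
    simp [f, dotProduct]
  refine ⟨f, fun h0 => hv0 (funext fun i => ?_), fun x => ?_⟩
  · simpa [hf, dotProduct, Finsupp.single_apply] using LinearMap.congr_fun h0 (b i)
  · have hcoord : Complex.ofRealHom ∘ b.repr (Φ x) = M *ᵥ (Complex.ofRealHom ∘ b.repr x) := by
      ext i
      rw [← LinearMap.toMatrix_mulVec_repr b b Φ, Function.comp_apply, RingHom.map_mulVec]
    rw [hf, hf, hcoord, Matrix.dotProduct_mulVec, hvM, smul_dotProduct, smul_eq_mul]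

theorem norm_sum_pow_mul_le {𝕜 : Type*} [NormedField 𝕜] {μ : 𝕜} (hμ : ‖μ‖ < 1) {C : ℝ}
    (hC : 0 ≤ C) {ℓ : ℕ} {a : Fin ℓ → 𝕜} (ha : ∀ j, ‖a j‖ ≤ C) :
    ‖∑ j : Fin ℓ, μ ^ (j : ℕ) * a j‖ ≤ C / (1 - ‖μ‖) := by
  calc ‖∑ j : Fin ℓ, μ ^ (j : ℕ) * a j‖ ≤ ∑ j : Fin ℓ, ‖μ‖ ^ (j : ℕ) * C := by
        refine (norm_sum_le _ _).trans (Finset.sum_le_sum fun j _ => ?_)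
        rw [norm_mul, norm_pow]
        exact mul_le_mul_of_nonneg_left (ha j) (by positivity)
    _ = (∑ i ∈ Finset.range ℓ, ‖μ‖ ^ i) * C := by
        rw [Finset.sum_mul, Fin.sum_univ_eq_sum_range (fun i => ‖μ‖ ^ i * C)]
    _ ≤ 1 / (1 - ‖μ‖) * C := by
        gcongr
        simpa using geom_sum_Ico_le_of_lt_one (m := 0) (n := ℓ) (norm_nonneg μ) hμ
    _ = C / (1 - ‖μ‖) := by ring

theorem one_le_norm_of_isRoot_charpoly {E : Type*} [AddCommGroup E] [Module ℝ E]
    [FiniteDimensional ℝ E] {Φ : Module.End ℝ E} {Λ : Submodule ℤ E}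
    (hΛ : Submodule.span ℝ (Λ : Set E) = ⊤) {D : Set E} (hD : D.Finite)
    (hexp : ∀ α ∈ Λ, ∃ (ℓ : ℕ) (η : Fin ℓ → E), (∀ j, η j ∈ insert 0 D) ∧ expansionValue Φ η = α)
    {μ : ℂ} (hμ : ((LinearMap.charpoly Φ).map (algebraMap ℝ ℂ)).IsRoot μ) : 1 ≤ ‖μ‖ := by
  by_contra! hμ1
  obtain ⟨f, hf0, hfΦ⟩ := Φ.exists_eigenfunctional hμ
  have hfpow : ∀ (k : ℕ) (x : E), f ((Φ ^ k) x) = μ ^ k * f x := by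
    intro k x
    induction k with
    | zero => simp
    | succ k ih => rw [pow_succ', Module.End.mul_apply, hfΦ, ih, pow_succ', mul_assoc]
  obtain ⟨x, hxΛ, hfx⟩ : ∃ x ∈ Λ, f x ≠ 0 := by
    by_contra! h
    exact hf0 (LinearMap.ext_on hΛ h)
  obtain ⟨C, hC⟩ := ((hD.insert 0).image (‖f ·‖)).bddAbove
  have hC0 : 0 ≤ C := by simpa using hC ⟨0, Set.mem_insert _ _, rfl⟩
  obtain ⟨m, hm⟩ := exists_nat_gt (C / (1 - ‖μ‖) / ‖f x‖)
  obtain ⟨ℓ, η, hη, hval⟩ := hexp (m • x) (Λ.smul_of_tower_mem m hxΛ)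
  have hbound : ‖f (m • x)‖ ≤ C / (1 - ‖μ‖) := by
    rw [← hval, expansionValue, map_sum]
    simp_rw [hfpow]
    exact norm_sum_pow_mul_le hμ1 hC0 fun j => hC ⟨η j, hη j, rfl⟩
  rw [map_nsmul, nsmul_eq_mul, norm_mul, Complex.norm_natCast] at hbound
  rw [div_lt_iff₀ (norm_pos_iff.mpr hfx)] at hm
  linarith

theorem LinearMap.charpoly_restrict_zlattice {E : Type*} [NormedAddCommGroup E]
    [NormedSpace ℝ E] [FiniteDimensional ℝ E] {Λ : Submodule ℤ E} [DiscreteTopology Λ]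
    [IsZLattice ℝ Λ] (Φ : Module.End ℝ E) (hΦ : Set.MapsTo Φ Λ Λ) :
    (LinearMap.charpoly ((Φ.restrictScalars ℤ).restrict hΦ)).map (algebraMap ℤ ℝ) =
      LinearMap.charpoly Φ := by
  classical
  let bℤ := Module.Free.chooseBasis ℤ Λ
  let b := bℤ.ofZLatticeBasis ℝ Λ
  have hM : (LinearMap.toMatrix bℤ bℤ ((Φ.restrictScalars ℤ).restrict hΦ)).map (algebraMap ℤ ℝ) =
      LinearMap.toMatrix b b Φ := by
    ext i j
    simp only [LinearMap.toMatrix_apply, Matrix.map_apply, b, Module.Basis.ofZLatticeBasis_apply]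
    exact (bℤ.ofZLatticeBasis_repr_apply ℝ Λ _ i).symm
  rw [← LinearMap.charpoly_toMatrix _ bℤ, ← Matrix.charpoly_map, hM, LinearMap.charpoly_toMatrix]

theorem Module.End.exists_ne_zero_pow_apply_eq_self {L : Type*} [AddCommGroup L]
    [Module.Free ℤ L] [Module.Finite ℤ L] (ψ : Module.End ℤ L) {lam : ℂ}
    (hlam : aeval lam (LinearMap.charpoly ψ) = 0) {N : ℕ} (hN : lam ^ N = 1) :
    ∃ z ≠ 0, (ψ ^ N) z = z := by
  classical
  let toMat := LinearMap.toMatrixAlgEquiv (Module.Free.chooseBasis ℤ L)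
  let cast := (algebraMap ℤ ℂ).mapMatrix (m := Module.Free.ChooseBasisIndex ℤ L)
  have hspec : lam ∈ spectrum ℂ (cast (toMat ψ)) := by
    rwa [Matrix.mem_spectrum_iff_isRoot_charpoly, RingHom.mapMatrix_apply, Matrix.charpoly_map,
      IsRoot, eval_map_algebraMap]
  have hdet : LinearMap.det (1 - ψ ^ N) = 0 := by
    have h1 := hN ▸ spectrum.pow_mem_pow _ N hspec
    rw [spectrum.mem_iff, map_one, Matrix.isUnit_iff_isUnit_det, isUnit_iff_ne_zero, not_not,
      ← map_pow, ← map_one cast, ← map_sub, ← RingHom.map_det,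
      ← map_one toMat, ← map_pow, ← map_sub] at h1
    rw [← LinearMap.det_toMatrix (Module.Free.chooseBasis ℤ L)]
    exact (algebraMap ℤ ℂ).injective_int (h1.trans (map_zero _).symm)
  obtain ⟨z, hz, hz0⟩ :=
    Submodule.exists_mem_ne_zero_of_ne_bot (LinearMap.bot_lt_ker_of_det_eq_zero hdet).ne'
  exact ⟨z, hz0, (sub_eq_zero.mp (LinearMap.mem_ker.mp hz)).symm⟩

/-- Complex conjugation sends `lam` to `lam⁻¹`, so the conjugates of `lam` lie outside the open
unit disc together with their inverses, hence on the unit circle. -/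
theorem Polynomial.Monic.exists_pow_eq_one_of_norm_eq_one {p : ℤ[X]} (hp : p.Monic) {lam : ℂ}
    (hlam : aeval lam p = 0) (hroots : ∀ μ : ℂ, aeval μ p = 0 → 1 ≤ ‖μ‖) (h1 : ‖lam‖ = 1) :
    ∃ N, 0 < N ∧ lam ^ N = 1 := by
  have hint : IsIntegral ℤ lam := ⟨p, hp, hlam⟩
  have hintℚ : IsIntegral ℚ lam := hint.tower_top
  set q := minpoly ℚ lam
  have hq : ∀ μ : ℂ, aeval μ q = 0 → 1 ≤ ‖μ‖ := fun μ hμ => by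
    refine hroots μ ?_
    rw [← aeval_map_algebraMap ℚ]
    refine aeval_eq_zero_of_dvd_aeval_eq_zero (minpoly.dvd ℚ lam ?_) hμ
    rw [aeval_map_algebraMap, hlam]
  have hinv : aeval lam⁻¹ q = 0 := by
    rw [Complex.inv_eq_conj h1, ← RingHom.toRatAlgHom_apply, aeval_algHom_apply, minpoly.aeval,
      map_zero]
  have : NumberField ℚ⟮lam⟯ :=
    { to_charZero := inferInstance
      to_finiteDimensional := IntermediateField.adjoin.finiteDimensional hintℚ }
  set x := AdjoinSimple.gen ℚ lam
  have hx : algebraMap ℚ⟮lam⟯ ℂ x = lam := AdjoinSimple.algebraMap_gen ℚ lam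
  have hconj : ∀ y : ℚ⟮lam⟯, aeval (algebraMap ℚ⟮lam⟯ ℂ y) q = 0 →
      ∀ φ : ℚ⟮lam⟯ →+* ℂ, 1 ≤ ‖φ y‖ := fun y hy φ => by
    rw [aeval_algebraMap_apply, map_eq_zero] at hy
    refine hq _ ?_
    rw [← φ.toRatAlgHom_apply, aeval_algHom_apply, hy, map_zero]
  have hxint : IsIntegral ℤ x := by
    rwa [← isIntegral_algebraMap_iff (algebraMap ℚ⟮lam⟯ ℂ).injective, hx]
  obtain ⟨N, hN, hxN⟩ := NumberField.Embeddings.pow_eq_one_of_norm_eq_one ℚ⟮lam⟯ ℂ hxint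
    fun φ => by
      have hge := hconj x (by rw [hx]; exact minpoly.aeval ℚ lam) φ
      have hle := hconj x⁻¹ (by rwa [map_inv₀, hx]) φ
      rw [map_inv₀, norm_inv, one_le_inv₀ (zero_lt_one.trans_le hge)] at hle
      exact le_antisymm hle hge
  exact ⟨N, hN, by rw [← hx, ← map_pow, hxN, map_one]⟩

theorem wnads_implies_expanding_general
    {E : Type*} [NormedAddCommGroup E] [NormedSpace ℝ E] [FiniteDimensional ℝ E]
    {n : ℕ} (b : Module.Basis (Fin n) ℝ E)
    (Λ : Set E) (hΛ : Λ = ↑(Submodule.span ℤ (Set.range ⇑b)))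
    (Φ : E →ₗ[ℝ] E) (hΦinj : Function.Injective Φ)
    (hΦΛ : ∀ x ∈ Λ, Φ x ∈ Λ)
    (w : ℕ)
    (Dbul : Set E) (hDΛ : Dbul ⊆ Λ)
    (hDnot : ∀ δ ∈ Dbul, δ ∉ ⇑Φ '' Λ)
    (hDrep : ∀ α ∈ Λ, α ∉ ⇑Φ '' Λ →
      ∃! δ, δ ∈ Dbul ∧ α - δ ∈ ⇑(Φ ^ w) '' Λ)
    (hNADS : ∀ α ∈ Λ, ∃ (ℓ : ℕ) (η : Fin ℓ → E),
      (∀ j, η j ∈ insert (0 : E) Dbul) ∧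
      (∀ i j : Fin ℓ, (i : ℕ) < (j : ℕ) → (j : ℕ) < (i : ℕ) + w → η i ≠ 0 → η j = 0) ∧
      (∑ j : Fin ℓ, (Φ ^ (j : ℕ)) (η j)) = α) :
    ∀ lam : ℂ, (Polynomial.map (algebraMap ℝ ℂ) (LinearMap.charpoly Φ)).IsRoot lam →
      1 < ‖lam‖ := by
  subst hΛ
  have hDfin : Dbul.Finite :=
    Set.finite_of_existsUnique_sub_mem_image (T := (Φ ^ w).toAddMonoidHom)
      (by simpa [Module.End.coe_pow] using hΦinj.iterate w)
      (fun x hx => Module.End.pow_apply_mem_of_mapsTo hΦΛ w hx) hDΛ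
      fun δ hδ => hDrep δ (hDΛ hδ) (hDnot δ hδ)
  have hge : ∀ μ : ℂ, ((LinearMap.charpoly Φ).map (algebraMap ℝ ℂ)).IsRoot μ → 1 ≤ ‖μ‖ :=
    fun μ => one_le_norm_of_isRoot_charpoly IsZLattice.span_top hDfin fun α hα => by
      obtain ⟨ℓ, η, hη, -, hval⟩ := hNADS α hα
      exact ⟨ℓ, η, hη, hval⟩
  intro lam hlam
  refine (hge lam hlam).lt_of_ne fun h1 => ?_
  let ψ := (Φ.restrictScalars ℤ).restrict hΦΛ
  have hroot : ∀ μ : ℂ, aeval μ (LinearMap.charpoly ψ) = 0 ↔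
      ((LinearMap.charpoly Φ).map (algebraMap ℝ ℂ)).IsRoot μ := fun μ => by
    rw [← LinearMap.charpoly_restrict_zlattice Φ hΦΛ, Polynomial.map_map,
      ← IsScalarTower.algebraMap_eq, IsRoot, eval_map_algebraMap]
  obtain ⟨N, hN, hlamN⟩ := (LinearMap.charpoly_monic ψ).exists_pow_eq_one_of_norm_eq_one
    ((hroot lam).mpr hlam) (fun μ hμ => hge μ ((hroot μ).mp hμ)) h1.symm
  obtain ⟨z, hz0, hz⟩ :=
    Module.End.exists_ne_zero_pow_apply_eq_self ψ ((hroot lam).mpr hlam) hlamN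
  have hzfix : (Φ ^ N) z = z := by
    have hsemi : Function.Semiconj Subtype.val ψ Φ := fun _ => rfl
    rw [Module.End.coe_pow, ← hsemi.iterate_right N z, ← Module.End.coe_pow, hz]
  obtain ⟨ℓ, η, hη, -, hval⟩ := hNADS z z.2
  change expansionValue Φ η = z at hval
  refine hz0 (Subtype.ext (hval.symm.trans ?_))
  refine expansionValue_eq_zero_of_forall_mem_image_pow hΦinj hΦΛ hDΛ hDnot hη fun m => ?_
  exact hval ▸ mem_image_pow_of_pow_apply_eq_self hΦΛ hN z.2 hzfix m

/-- If a digit set `D` attached to a pre-`w`-NADS on a full-rank lattice `Λ`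
in `ℝ^n` is a `w`-NADS, then the base endomorphism `Φ` is expanding: every
complex eigenvalue has absolute value `> 1`. -/
theorem wnads_implies_expanding
    {E : Type*} [NormedAddCommGroup E] [NormedSpace ℝ E] [FiniteDimensional ℝ E]
    {n : ℕ} (b : Module.Basis (Fin n) ℝ E)
    (Λ : Set E) (hΛ : Λ = ↑(Submodule.span ℤ (Set.range ⇑b)))
    (Φ : E →ₗ[ℝ] E) (hΦinj : Function.Injective Φ)
    (hΦΛ : ∀ x ∈ Λ, Φ x ∈ Λ)
    (w : ℕ) (hw : 1 ≤ w)
    (Dbul : Set E) (hDΛ : Dbul ⊆ Λ)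
    (hDnot : ∀ δ ∈ Dbul, δ ∉ ⇑Φ '' Λ)
    (hDrep : ∀ α ∈ Λ, α ∉ ⇑Φ '' Λ →
      ∃! δ, δ ∈ Dbul ∧ α - δ ∈ ⇑(Φ ^ w) '' Λ)
    (hNADS : ∀ α ∈ Λ, ∃ (ℓ : ℕ) (η : Fin ℓ → E),
      (∀ j, η j ∈ insert (0 : E) Dbul) ∧
      (∀ i j : Fin ℓ, (i : ℕ) < (j : ℕ) → (j : ℕ) < (i : ℕ) + w → η i ≠ 0 → η j = 0) ∧
      (∑ j : Fin ℓ, (Φ ^ (j : ℕ)) (η j)) = α) :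
    ∀ lam : ℂ, (Polynomial.map (algebraMap ℝ ℂ) (LinearMap.charpoly Φ)).IsRoot lam →
      1 < ‖lam‖ :=
  wnads_implies_expanding_general b Λ hΛ Φ hΦinj hΦΛ w Dbul hDΛ hDnot hDrep hNADS
end

section
/- Let Λ ⊆ ℝ^n be a lattice and V ⊆ ℝ^n a set tiling ℝ^n by Λ (meaning ⋃_{z∈Λ}(z+V) = ℝ^n and V ∩ (z+V) ⊆ ∂V for all z ∈ Λ, z ≠ 0). Let Φ be an injective linear endomorphism of ℝ^n with Φ(Λ) ⊆ Λ and w ≥ 1. Then the set D̃ := {α ∈ Λ : Φ^{−w}(α) ∈ V} contains a complete residue system of Λ modulo Φ^w(Λ). Furthermore, if α, α′ ∈ D̃ are distinct and α ≡ α′ (mod Φ^w(Λ)), then both Φ^{−w}(α) and Φ^{−w}(α′) lie in the boundary ∂V. -/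
/-! Choosing `z ∈ Λ` with `Φ^{-w} β - z ∈ V`, the element `α = β - Φ^w z` is congruent to `β`
and lies in `D̃`. Conversely, if `α ≡ α'` with `α - α' = Φ^w z`, then `Φ^{-w} α` and
`Φ^{-w} α'` are two points of `V` differing by the lattice vector `z ≠ 0`, so both lie in
`V ∩ (±z + V) ⊆ ∂V`. -/

section TranslationTiling

variable {G : Type*} [AddCommGroup G] {L : AddSubgroup G} {V : Set G}

theorem exists_symm_mem_and_sub_mem_image (f : G ≃+ G) (hf : ∀ x ∈ L, f x ∈ L)
    (hcover : ∀ x : G, ∃ z ∈ L, x - z ∈ V) {β : G} (hβ : β ∈ L) :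
    ∃ α, (α ∈ L ∧ f.symm α ∈ V) ∧ β - α ∈ f '' L := by
  obtain ⟨z, hz, hzV⟩ := hcover (f.symm β)
  refine ⟨β - f z, ⟨L.sub_mem hβ (hf z hz), ?_⟩, z, hz, (sub_sub_cancel β (f z)).symm⟩
  rwa [map_sub, f.symm_apply_apply]

theorem symm_sub_mem_of_sub_mem_image (f : G ≃+ G) {α α' : G} (h : α - α' ∈ f '' L) :
    f.symm α - f.symm α' ∈ L := by
  obtain ⟨z, hz, hfz⟩ := h
  rwa [← map_sub, ← hfz, f.symm_apply_apply]

theorem mem_and_mem_of_sub_mem_of_overlap {S : Set G}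
    (hoverlap : ∀ z ∈ L, z ≠ 0 → ∀ x ∈ V, x - z ∈ V → x ∈ S)
    {x y : G} (hx : x ∈ V) (hy : y ∈ V) (hxy : x - y ∈ L) (hne : x ≠ y) :
    x ∈ S ∧ y ∈ S :=
  ⟨hoverlap _ hxy (sub_ne_zero.mpr hne) x hx (by rwa [sub_sub_cancel]),
    hoverlap _ (L.sub_mem_comm_iff.mp hxy) (sub_ne_zero.mpr hne.symm) y hy
      (by rwa [sub_sub_cancel])⟩

end TranslationTiling

theorem tiling_residue_system_general
    {E : Type*} [NormedAddCommGroup E] [NormedSpace ℝ E]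
    {n : ℕ} (b : Module.Basis (Fin n) ℝ E)
    (Λ : Set E) (hΛ : Λ = ↑(Submodule.span ℤ (Set.range ⇑b)))
    (Φ : E ≃ₗ[ℝ] E) (hΦΛ : ∀ x ∈ Λ, Φ x ∈ Λ)
    (w : ℕ)
    (V : Set E)
    (hVcover : ∀ x : E, ∃ z ∈ Λ, x - z ∈ V)
    (hVdisj : ∀ z ∈ Λ, z ≠ 0 → ∀ x ∈ V, x - z ∈ V → x ∈ frontier V) :
    (∀ β ∈ Λ, ∃ α, (α ∈ Λ ∧ (Φ ^ w).symm α ∈ V) ∧ β - α ∈ ⇑(Φ ^ w) '' Λ) ∧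
      (∀ α α', (α ∈ Λ ∧ (Φ ^ w).symm α ∈ V) → (α' ∈ Λ ∧ (Φ ^ w).symm α' ∈ V) →
        α ≠ α' → α - α' ∈ ⇑(Φ ^ w) '' Λ →
        (Φ ^ w).symm α ∈ frontier V ∧ (Φ ^ w).symm α' ∈ frontier V) := by
  subst hΛ
  set L := (Submodule.span ℤ (Set.range b)).toAddSubgroup
  have hΦwL : ∀ x ∈ L, (Φ ^ w) x ∈ L := by
    rw [LinearEquiv.coe_pow]
    exact Set.MapsTo.iterate hΦΛ w
  refine ⟨fun β hβ ↦ exists_symm_mem_and_sub_mem_image (Φ ^ w).toAddEquiv hΦwL hVcover hβ, ?_⟩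
  rintro α α' ⟨-, hαV⟩ ⟨-, hα'V⟩ hne hsub
  exact mem_and_mem_of_sub_mem_of_overlap hVdisj hαV hα'V
    (symm_sub_mem_of_sub_mem_image (L := L) (Φ ^ w).toAddEquiv hsub) ((Φ ^ w).symm.injective.ne hne)

/-- Lemma 4.2: for a set `V` tiling `ℝ^n` by the lattice `Λ`, the set
`D̃ = {α ∈ Λ : Φ^{-w} α ∈ V}` contains a complete residue system modulo
`Φ^w(Λ)`, and two distinct congruent elements of `D̃` both have
`Φ^{-w}`-image on the boundary of `V`. -/
theorem tiling_residue_system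
    {E : Type*} [NormedAddCommGroup E] [NormedSpace ℝ E] [FiniteDimensional ℝ E]
    {n : ℕ} (b : Module.Basis (Fin n) ℝ E)
    (Λ : Set E) (hΛ : Λ = ↑(Submodule.span ℤ (Set.range ⇑b)))
    (Φ : E ≃ₗ[ℝ] E) (hΦΛ : ∀ x ∈ Λ, Φ x ∈ Λ)
    (w : ℕ) (hw : 1 ≤ w)
    (V : Set E)
    (hVcover : ∀ x : E, ∃ z ∈ Λ, x - z ∈ V)
    (hVdisj : ∀ z ∈ Λ, z ≠ 0 → ∀ x ∈ V, x - z ∈ V → x ∈ frontier V) :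
    (∀ β ∈ Λ, ∃ α, (α ∈ Λ ∧ (Φ ^ w).symm α ∈ V) ∧ β - α ∈ ⇑(Φ ^ w) '' Λ) ∧
      (∀ α α', (α ∈ Λ ∧ (Φ ^ w).symm α ∈ V) → (α' ∈ Λ ∧ (Φ ^ w).symm α' ∈ V) →
        α ≠ α' → α - α' ∈ ⇑(Φ ^ w) '' Λ →
        (Φ ^ w).symm α ∈ frontier V ∧ (Φ ^ w).symm α' ∈ frontier V) :=
  tiling_residue_system_general b Λ hΛ Φ hΦΛ w V hVcover hVdisj
end

section
/- Let Λ ⊆ ℝ^n be a lattice, Φ an expanding injective endomorphism of ℝ^n with Φ(Λ) ⊆ Λ, V a subset of ℝ^n tiling ℝ^n by Λ, and let ‖·‖ be a vector norm on ℝ^n whose induced operator norm satisfies ‖Φ^{−1}‖ < 1. Let r, R > 0 be such that {x : ‖x‖ ≤ r} ⊆ V ⊆ {x : ‖x‖ ≤ R}. Let D = D• ∪ {0}, where D• ⊆ {α ∈ Λ : Φ^{−w}(α) ∈ V} contains exactly one representative of every residue class of Λ modulo Φ^w(Λ) not contained in Φ(Λ). If w is a positive integer with ‖Φ^{−1}‖^w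 < 1/(1 + R/r), then D is a w-NADS: every element of Λ admits a D-w-NAF expansion. -/
/-!
Measure `α ∈ Λ` by the potential `‖Φ⁻ʷ α‖`. The closed `r`-ball lies in `V`, so its open part lies
in the interior of the tile; hence nonzero lattice points have norm `> r` and the potential is
bounded below by some `ρ > 0` on `Λ \ {0}`. If `α = Φ β`, passing to `β` multiplies the potential
by at most `‖Φ⁻¹‖ < 1`. Otherwise `α = δ + Φʷ γ` for a digit `δ`: either `‖Φ⁻ʷ α‖ < r`, and then
`Φ⁻ʷ α` and `Φ⁻ʷ α - γ = Φ⁻ʷ δ` both lie in `V`, so the tiling forces `γ = 0`; or the potential of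
`γ` is at most `‖Φ⁻¹‖ʷ (‖Φ⁻ʷ α‖ + R)`, which is smaller by at least `r - ‖Φ⁻¹‖ʷ (r + R) > 0`.
The potential thus drops by a fixed amount at each digit, so the expansion terminates.
-/

def HasWNAF {R M : Type*} [Semiring R] [AddCommMonoid M] [Module R M]
    (Φ : Module.End R M) (w : ℕ) (D : Set M) (α : M) : Prop :=
  ∃ (ℓ : ℕ) (η : Fin ℓ → M),
    (∀ j, η j ∈ D) ∧
    (∀ i j : Fin ℓ, (i : ℕ) < (j : ℕ) → (j : ℕ) < (i : ℕ) + w → η i ≠ 0 → η j = 0) ∧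
    (∑ j : Fin ℓ, (Φ ^ (j : ℕ)) (η j)) = α

namespace HasWNAF

variable {R M : Type*} [Semiring R] [AddCommMonoid M] [Module R M]
  {Φ : Module.End R M} {w : ℕ} {D : Set M}

theorem zero : HasWNAF Φ w D 0 :=
  ⟨0, Fin.elim0, fun j => j.elim0, fun i => i.elim0, by simp⟩

theorem prepend {β δ : M} (h : HasWNAF Φ w D β) (h0 : 0 ∈ D) (hδ : δ ∈ D) {k : ℕ} (hk : 0 < k)
    (hkw : δ ≠ 0 → w ≤ k) : HasWNAF Φ w D (δ + (Φ ^ k) β) := by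
  obtain ⟨ℓ, η, hηD, hηw, rfl⟩ := h
  let head : Fin k → M := fun i => if (i : ℕ) = 0 then δ else 0
  refine ⟨k + ℓ, Fin.append head η, ?_, ?_, ?_⟩
  · refine Fin.addCases (fun i => ?_) (fun i => ?_) <;>
      simp only [Fin.append_left, Fin.append_right, head]
    · split_ifs <;> assumption
    · exact hηD i
  · refine Fin.addCases (fun i => Fin.addCases (fun j => ?_) (fun j => ?_))
      (fun i => Fin.addCases (fun j => ?_) (fun j => ?_)) <;>
      simp only [Fin.append_left, Fin.append_right, Fin.val_castAdd, Fin.val_natAdd, head] <;>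
      intro hij hjw hi
    · simp only [ite_eq_right_iff]; omega
    · split_ifs at hi with hi0
      · have := hkw hi; omega
      · exact absurd rfl hi
    · omega
    · exact hηw i j (by omega) (by omega) hi
  · rw [Fin.sum_univ_add, map_sum]
    congr 1
    · rw [Fintype.sum_eq_single ⟨0, hk⟩ fun i hi => by simp [head, Fin.ext_iff.not.mp hi]]
      simp only [Fin.append_left]
      simp [head]
    · simp [pow_add, Module.End.mul_apply]

end HasWNAF

theorem forall_of_forall_le_sub_imp {ι : Type*} (f : ι → ℝ) (hf : ∀ x, 0 ≤ f x) {ε : ℝ}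
    (hε : 0 < ε) {P : ι → Prop} (step : ∀ x, (∀ y, f y ≤ f x - ε → P y) → P x) (x : ι) :
    P x := by
  suffices h : ∀ n : ℕ, ∀ x, f x < ε * n → P x by
    obtain ⟨n, hn⟩ := exists_nat_gt (f x / ε)
    exact h n x ((div_lt_iff₀' hε).mp hn)
  intro n
  induction n with
  | zero => exact fun x hx => absurd (hf x) (by simpa using hx)
  | succ n ih =>
    refine fun x hx => step x fun y hy => ih y ?_
    push_cast at hx
    linarith

section Tiling

variable {E : Type*} [SeminormedAddCommGroup E] {Λ V : Set E} {r : ℝ}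

theorem eq_zero_of_norm_lt_of_sub_mem (hrV : {x : E | ‖x‖ ≤ r} ⊆ V)
    (hVdisj : ∀ z ∈ Λ, z ≠ 0 → ∀ x ∈ V, x - z ∈ V → x ∈ frontier V)
    {z x : E} (hz : z ∈ Λ) (hx : ‖x‖ < r) (hxz : x - z ∈ V) : z = 0 := by
  by_contra hz0
  have hxV : x ∈ interior V :=
    interior_maximal (fun y hy => hrV (mem_ball_zero_iff.mp hy).le) Metric.isOpen_ball
      (mem_ball_zero_iff.mpr hx)
  exact (hVdisj z hz hz0 x (hrV hx.le) hxz).2 hxV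

theorem lt_norm_of_mem_of_ne_zero (hr : 0 < r) (hrV : {x : E | ‖x‖ ≤ r} ⊆ V)
    (hVdisj : ∀ z ∈ Λ, z ≠ 0 → ∀ x ∈ V, x - z ∈ V → x ∈ frontier V)
    {z : E} (hz : z ∈ Λ) (hz0 : z ≠ 0) : r < ‖z‖ := by
  by_contra! hzr
  exact hz0 (eq_zero_of_norm_lt_of_sub_mem (x := 0) hrV hVdisj hz (by simpa using hr)
    (hrV (by simpa using hzr)))

end Tiling

section Contraction

variable {E : Type*} [NormedAddCommGroup E] [NormedSpace ℝ E]

theorem norm_symm_pow_apply_le (Φ : E ≃ₗ[ℝ] E) {q : ℝ} (hq0 : 0 ≤ q)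
    (hq : ∀ x, ‖Φ.symm x‖ ≤ q * ‖x‖) (m : ℕ) (x : E) : ‖(Φ ^ m).symm x‖ ≤ q ^ m * ‖x‖ := by
  induction m with
  | zero => exact (one_mul _).ge
  | succ m ih =>
    calc ‖(Φ ^ (m + 1)).symm x‖ = ‖Φ.symm ((Φ ^ m).symm x)‖ := by rw [pow_succ]; rfl
      _ ≤ q * (q ^ m * ‖x‖) := (hq _).trans (mul_le_mul_of_nonneg_left ih hq0)
      _ = q ^ (m + 1) * ‖x‖ := by ring

theorem norm_symm_pow_apply_le_mul_norm_symm_pow_map (Φ : E ≃ₗ[ℝ] E) {q : ℝ}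
    (hq : ∀ x, ‖Φ.symm x‖ ≤ q * ‖x‖) (w : ℕ) (β : E) :
    ‖(Φ ^ w).symm β‖ ≤ q * ‖(Φ ^ w).symm (Φ β)‖ := by
  have hcomm : Φ.symm ((Φ ^ w).symm (Φ β)) = (Φ ^ w).symm β :=
    calc Φ.symm ((Φ ^ w).symm (Φ β)) = (Φ ^ (w + 1)).symm (Φ β) := by rw [pow_succ]; rfl
      _ = (Φ ^ w).symm (Φ.symm (Φ β)) := by rw [pow_succ']; rfl
      _ = (Φ ^ w).symm β := by rw [Φ.symm_apply_apply]
  exact hcomm ▸ hq _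

theorem exists_pos_forall_lt_norm_symm_apply [FiniteDimensional ℝ E] (Ψ : E ≃ₗ[ℝ] E)
    {Λ : Set E} {r : ℝ} (hr : 0 < r) (hΛ : ∀ z ∈ Λ, z ≠ 0 → r < ‖z‖) :
    ∃ ρ > 0, ∀ z ∈ Λ, z ≠ 0 → ρ < ‖Ψ.symm z‖ := by
  obtain ⟨C, hC, hΨC⟩ := (LinearMap.toContinuousLinearMap (Ψ : E →ₗ[ℝ] E)).bound
  refine ⟨r / C, div_pos hr hC, fun z hz hz0 => (div_lt_iff₀' hC).mpr ?_⟩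
  calc r < ‖z‖ := hΛ z hz hz0
    _ = ‖Ψ (Ψ.symm z)‖ := by rw [Ψ.apply_symm_apply]
    _ ≤ C * ‖Ψ.symm z‖ := hΨC _

end Contraction

theorem mul_add_lt_of_lt_one_div_one_add_div {s r R : ℝ} (hs : 0 ≤ s) (hr : 0 < r)
    (h : s < 1 / (1 + R / r)) : s * (r + R) < r := by
  have hpos : 0 < 1 + R / r := by
    by_contra! hneg
    exact (hs.trans_lt h).not_ge (div_nonpos_of_nonneg_of_nonpos zero_le_one hneg)
  rw [lt_div_iff₀ hpos] at h
  calc s * (r + R) = r * (s * (1 + R / r)) := by field_simp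
    _ < r := mul_lt_of_lt_one_right hr h

section Expansion

variable {E : Type*} [NormedAddCommGroup E] [NormedSpace ℝ E] [FiniteDimensional ℝ E]

theorem hasWNAF_of_tiling (Φ : E ≃ₗ[ℝ] E) {Λ V D : Set E} {q r R : ℝ} {w : ℕ}
    (hw : 1 ≤ w) (hq0 : 0 ≤ q) (hq : ∀ x, ‖Φ.symm x‖ ≤ q * ‖x‖) (hq1 : q < 1) (hr : 0 < r)
    (hrV : {x : E | ‖x‖ ≤ r} ⊆ V) (hVR : V ⊆ {x : E | ‖x‖ ≤ R})
    (hVdisj : ∀ z ∈ Λ, z ≠ 0 → ∀ x ∈ V, x - z ∈ V → x ∈ frontier V)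
    (hDV : ∀ δ ∈ D, (Φ ^ w).symm δ ∈ V)
    (hDrep : ∀ α ∈ Λ, α ∉ Φ '' Λ → ∃ δ ∈ D, α - δ ∈ (Φ ^ w) '' Λ)
    (hbound : q ^ w * (r + R) < r) :
    ∀ α ∈ Λ, HasWNAF (Φ : E →ₗ[ℝ] E) w (insert 0 D) α := by
  set Ψ := (Φ ^ w).symm
  obtain ⟨ρ, hρ, hΨΛ⟩ := exists_pos_forall_lt_norm_symm_apply (Φ ^ w) hr
    fun _ => lt_norm_of_mem_of_ne_zero hr hrV hVdisj
  have hΨ : ∀ x, ‖Ψ x‖ ≤ q ^ w * ‖x‖ := norm_symm_pow_apply_le Φ hq0 hq w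
  set ε := min ((1 - q) * ρ) (r - q ^ w * (r + R))
  have hε : 0 < ε := lt_min (mul_pos (sub_pos.2 hq1) hρ) (sub_pos.2 hbound)
  refine forall_of_forall_le_sub_imp (fun α => ‖Ψ α‖) (fun _ => norm_nonneg _) hε
    fun α ih hα => ?_
  rcases eq_or_ne α 0 with rfl | hα0
  · exact HasWNAF.zero
  by_cases hΦα : α ∈ Φ '' Λ
  · obtain ⟨β, hβ, rfl⟩ := hΦα
    have hdecr : ‖Ψ β‖ ≤ ‖Ψ (Φ β)‖ - ε := by
      nlinarith [norm_symm_pow_apply_le_mul_norm_symm_pow_map Φ hq w β, hΨΛ _ hα hα0,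
        min_le_left ((1 - q) * ρ) (r - q ^ w * (r + R))]
    simpa using (ih β hdecr hβ).prepend (Set.mem_insert _ _) (Set.mem_insert _ _) one_pos
      fun h => absurd rfl h
  obtain ⟨δ, hδ, γ, hγ, hγα⟩ := hDrep α hα hΦα
  have hΨγ : Ψ α - γ = Ψ δ := by
    rw [← (Φ ^ w).symm_apply_apply γ, hγα, map_sub, sub_sub_cancel]
  have hαγ : α = δ + ((Φ : E →ₗ[ℝ] E) ^ w) γ := by
    rw [Module.End.pow_apply, LinearEquiv.coe_coe, ← LinearEquiv.pow_apply, hγα, add_sub_cancel]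
  rw [hαγ]
  refine HasWNAF.prepend ?_ (Set.mem_insert _ _) (Set.mem_insert_of_mem _ hδ) hw fun _ => le_rfl
  by_cases hαr : ‖Ψ α‖ < r
  · rw [eq_zero_of_norm_lt_of_sub_mem hrV hVdisj hγ hαr (hΨγ ▸ hDV δ hδ)]
    exact HasWNAF.zero
  refine ih γ ?_ hγ
  calc ‖Ψ γ‖ = ‖Ψ (Ψ α - Ψ δ)‖ := by rw [← hΨγ, sub_sub_cancel]
    _ ≤ q ^ w * (‖Ψ α‖ + R) := (hΨ _).trans <| mul_le_mul_of_nonneg_left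
        ((norm_sub_le _ _).trans (add_le_add_right (hVR (hDV δ hδ)) _)) (pow_nonneg hq0 w)
    _ ≤ ‖Ψ α‖ - ε := by
      nlinarith [pow_le_one₀ hq0 hq1.le (n := w), min_le_right ((1 - q) * ρ) (r - q ^ w * (r + R))]

end Expansion

theorem tiling_wNADS_general
    {E : Type*} [NormedAddCommGroup E] [NormedSpace ℝ E] [FiniteDimensional ℝ E]
    (Λ : Set E)
    (Φ : E ≃ₗ[ℝ] E)
    (V : Set E)
    (hVdisj : ∀ z ∈ Λ, z ≠ 0 → ∀ x ∈ V, x - z ∈ V → x ∈ frontier V)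
    (q : ℝ) (hq : q = ‖LinearMap.toContinuousLinearMap (Φ.symm : E →ₗ[ℝ] E)‖)
    (hq1 : q < 1)
    (r R : ℝ) (hr : 0 < r)
    (hrV : {x : E | ‖x‖ ≤ r} ⊆ V) (hVR : V ⊆ {x : E | ‖x‖ ≤ R})
    (w : ℕ) (hw : 1 ≤ w)
    (Dbul : Set E)
    (hDV : Dbul ⊆ {α ∈ Λ | (Φ ^ w).symm α ∈ V})
    (hDrep : ∀ α ∈ Λ, α ∉ ⇑Φ '' Λ →
      ∃! δ, δ ∈ Dbul ∧ α - δ ∈ ⇑(Φ ^ w) '' Λ)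
    (hbound : q ^ w < 1 / (1 + R / r)) :
    ∀ α ∈ Λ, ∃ (ℓ : ℕ) (η : Fin ℓ → E),
      (∀ j, η j ∈ insert (0 : E) Dbul) ∧
      (∀ i j : Fin ℓ, (i : ℕ) < (j : ℕ) → (j : ℕ) < (i : ℕ) + w → η i ≠ 0 → η j = 0) ∧
      (∑ j : Fin ℓ, ((Φ : E →ₗ[ℝ] E) ^ (j : ℕ)) (η j)) = α := by
  have hq0 : 0 ≤ q := hq ▸ norm_nonneg _
  have hΦq : ∀ x, ‖Φ.symm x‖ ≤ q * ‖x‖ := fun x =>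
    hq ▸ (LinearMap.toContinuousLinearMap _).le_opNorm x
  exact hasWNAF_of_tiling Φ hw hq0 hΦq hq1 hr hrV hVR hVdisj (fun δ hδ => (hDV hδ).2)
    (fun α hα hαΦ => (hDrep α hα hαΦ).exists)
    (mul_add_lt_of_lt_one_div_one_add_div (pow_nonneg hq0 w) hr hbound)

/-- Theorem 4.3: a tiling-based digit set is a `w`-NADS provided
`‖Φ⁻¹‖^w < 1/(1 + R/r)`. -/
theorem tiling_wNADS
    {E : Type*} [NormedAddCommGroup E] [NormedSpace ℝ E] [FiniteDimensional ℝ E]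
    {n : ℕ} (b : Module.Basis (Fin n) ℝ E)
    (Λ : Set E) (hΛ : Λ = ↑(Submodule.span ℤ (Set.range ⇑b)))
    (Φ : E ≃ₗ[ℝ] E) (hΦΛ : ∀ x ∈ Λ, Φ x ∈ Λ)
    (hexp : ∀ lam : ℂ,
      (Polynomial.map (algebraMap ℝ ℂ) (LinearMap.charpoly (Φ : E →ₗ[ℝ] E))).IsRoot lam →
      1 < ‖lam‖)
    (V : Set E)
    (hVcover : ∀ x : E, ∃ z ∈ Λ, x - z ∈ V)
    (hVdisj : ∀ z ∈ Λ, z ≠ 0 → ∀ x ∈ V, x - z ∈ V → x ∈ frontier V)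
    (q : ℝ) (hq : q = ‖LinearMap.toContinuousLinearMap (Φ.symm : E →ₗ[ℝ] E)‖)
    (hq1 : q < 1)
    (r R : ℝ) (hr : 0 < r) (hR : 0 < R)
    (hrV : {x : E | ‖x‖ ≤ r} ⊆ V) (hVR : V ⊆ {x : E | ‖x‖ ≤ R})
    (w : ℕ) (hw : 1 ≤ w)
    (Dbul : Set E)
    (hDV : Dbul ⊆ {α ∈ Λ | (Φ ^ w).symm α ∈ V})
    (hDnot : ∀ δ ∈ Dbul, δ ∉ ⇑Φ '' Λ)
    (hDrep : ∀ α ∈ Λ, α ∉ ⇑Φ '' Λ →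
      ∃! δ, δ ∈ Dbul ∧ α - δ ∈ ⇑(Φ ^ w) '' Λ)
    (hbound : q ^ w < 1 / (1 + R / r)) :
    ∀ α ∈ Λ, ∃ (ℓ : ℕ) (η : Fin ℓ → E),
      (∀ j, η j ∈ insert (0 : E) Dbul) ∧
      (∀ i j : Fin ℓ, (i : ℕ) < (j : ℕ) → (j : ℕ) < (i : ℕ) + w → η i ≠ 0 → η j = 0) ∧
      (∑ j : Fin ℓ, ((Φ : E →ₗ[ℝ] E) ^ (j : ℕ)) (η j)) = α :=
  tiling_wNADS_general Λ Φ V hVdisj q hq hq1 r R hr hrV hVR w hw Dbul hDV hDrep hbound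
end

section
/- Let Λ ⊆ ℝ^n be a lattice, Φ an injective endomorphism of ℝ^n with Φ(Λ) ⊆ Λ, and ‖·‖ a vector norm with induced operator norm satisfying ‖Φ^{−1}‖ < 1. Let D ⊆ Λ be a finite digit set, M̃ := max{‖η‖ : η ∈ D}, and M := (‖Φ^{−1}‖/(1 − ‖Φ^{−1}‖)) · M̃. Then the map T(β) = Φ^{−1}(β − d(β)) (where d(β) ∈ D) satisfies: ‖T(β)‖ < ‖β‖ whenever ‖β‖ > M, and ‖T(β)‖ ≤ M whenever ‖β‖ ≤ M. Consequently, for every α ∈ Λ the orbit sequence (T^k(α))_{k ≥ 0} is eventually periodic. -/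
/-!
Write `q = ‖Φ⁻¹‖` and `M̃ = max_{η ∈ D} ‖η‖`. Since `T β = Φ⁻¹ (β - d β)`, we get
`‖T β‖ ≤ q (‖β‖ + M̃)`, and `M` is the fixed point of `t ↦ q (t + M̃)`; as `q < 1`, `T` shrinks
norms outside the closed ball of radius `M` and maps that ball into itself. So the orbit of `α`
stays in the lattice points of the ball of radius `max M ‖α‖`, a finite set, and by pigeonhole
some value repeats, after which the orbit is periodic.
-/

open Function Set Metric

theorem isPeriodicPt_iterate_of_iterate_eq {α : Type*} {f : α → α} {x : α} {i j : ℕ}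
    (hij : i ≤ j) (h : f^[i] x = f^[j] x) : IsPeriodicPt f (j - i) (f^[i] x) := by
  rw [IsPeriodicPt, IsFixedPt, ← iterate_add_apply, Nat.sub_add_cancel hij, h]

theorem exists_iterate_add_eq_of_forall_iterate_mem {α : Type*} {f : α → α} {x : α}
    {s : Set α} (hs : s.Finite) (hmem : ∀ k, f^[k] x ∈ s) :
    ∃ i p : ℕ, 0 < p ∧ ∀ k, i ≤ k → f^[k + p] x = f^[k] x := by
  obtain ⟨i, j, hij, heq⟩ := hs.exists_lt_map_eq_of_forall_mem hmem
  refine ⟨i, j - i, Nat.sub_pos_of_lt hij, fun k hk => ?_⟩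
  have hper := (isPeriodicPt_iterate_of_iterate_eq hij.le heq).apply_iterate (k - i)
  rwa [← iterate_add_apply, Nat.sub_add_cancel hk, IsPeriodicPt, IsFixedPt,
    ← iterate_add_apply, Nat.add_comm] at hper

theorem norm_iterate_le_max {E : Type*} [Norm E] {f : E → E} {S : Set E} {M : ℝ}
    (hS : MapsTo f S S) (hf : ∀ β ∈ S, ‖f β‖ ≤ max M ‖β‖) {a : E} (ha : a ∈ S) (k : ℕ) :
    ‖f^[k] a‖ ≤ max M ‖a‖ := by
  induction k with
  | zero => exact le_max_right _ _
  | succ k ih =>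
    rw [iterate_succ_apply']
    exact (hf _ (hS.iterate k ha)).trans (max_le (le_max_left _ _) ih)

theorem lt_and_le_of_le_mul_add {q c M s t : ℝ} (hq0 : 0 ≤ q) (hq1 : q < 1)
    (hM : M = q / (1 - q) * c) (ht : t ≤ q * (s + c)) :
    (M < s → t < s) ∧ (s ≤ M → t ≤ M) := by
  have hqc : q * c = (1 - q) * M := by
    rw [hM]
    field_simp [(sub_pos.mpr hq1).ne']
  constructor
  · intro hs
    nlinarith
  · intro hs
    nlinarith

theorem norm_le_of_apply_eq_sub {E : Type*} [NormedAddCommGroup E] [NormedSpace ℝ E]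
    [FiniteDimensional ℝ E] (Φ : E ≃ₗ[ℝ] E) {D : Finset E} (hD : D.Nonempty) {x β δ : E}
    (hδ : δ ∈ D) (hx : Φ x = β - δ) :
    ‖x‖ ≤ ‖LinearMap.toContinuousLinearMap (Φ.symm : E →ₗ[ℝ] E)‖ *
      (‖β‖ + D.sup' hD (fun η => ‖η‖)) := by
  have hx' : x = Φ.symm (β - δ) := by rw [← hx, LinearEquiv.symm_apply_apply]
  calc ‖x‖ ≤ ‖LinearMap.toContinuousLinearMap (Φ.symm : E →ₗ[ℝ] E)‖ * ‖β - δ‖ :=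
        hx' ▸ (LinearMap.toContinuousLinearMap (Φ.symm : E →ₗ[ℝ] E)).le_opNorm (β - δ)
    _ ≤ _ := by
        gcongr
        exact (norm_sub_le _ _).trans (add_le_add_right (D.le_sup' (fun η => ‖η‖) hδ) _)

theorem finite_digit_set_orbit_eventually_periodic_general
    {E : Type*} [NormedAddCommGroup E] [NormedSpace ℝ E] [FiniteDimensional ℝ E]
    {n : ℕ} (b : Module.Basis (Fin n) ℝ E)
    (Λ : Set E) (hΛ : Λ = ↑(Submodule.span ℤ (Set.range ⇑b)))
    (Φ : E ≃ₗ[ℝ] E)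
    (q : ℝ) (hq : q = ‖LinearMap.toContinuousLinearMap (Φ.symm : E →ₗ[ℝ] E)‖)
    (hq1 : q < 1)
    (D : Finset E) (hD0 : (0 : E) ∈ D)
    (Mt M : ℝ)
    (hMt : Mt = D.sup' ⟨0, hD0⟩ (fun η => ‖η‖))
    (hM : M = q / (1 - q) * Mt)
    (d T : E → E)
    (hdD : ∀ α ∈ Λ, d α ∈ D)
    (hT : ∀ α : E, Φ (T α) = α - d α)
    (hTΛ : ∀ α ∈ Λ, T α ∈ Λ) :
    (∀ β ∈ Λ, (M < ‖β‖ → ‖T β‖ < ‖β‖) ∧ (‖β‖ ≤ M → ‖T β‖ ≤ M)) ∧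
      (∀ α ∈ Λ, ∃ (i p : ℕ), 0 < p ∧ ∀ k : ℕ, i ≤ k → T^[k + p] α = T^[k] α) := by
  have hcontract (β : E) (hβ : β ∈ Λ) :
      (M < ‖β‖ → ‖T β‖ < ‖β‖) ∧ (‖β‖ ≤ M → ‖T β‖ ≤ M) := by
    refine lt_and_le_of_le_mul_add (hq ▸ norm_nonneg _) hq1 hM ?_
    rw [hq, hMt]
    exact norm_le_of_apply_eq_sub Φ ⟨0, hD0⟩ (hdD β hβ) (hT β)
  refine ⟨hcontract, fun α hα => ?_⟩
  have hmax (β : E) (hβ : β ∈ Λ) : ‖T β‖ ≤ max M ‖β‖ := by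
    rcases le_or_gt ‖β‖ M with h | h
    · exact le_max_of_le_left ((hcontract β hβ).2 h)
    · exact le_max_of_le_right ((hcontract β hβ).1 h).le
  have hfinite : (closedBall 0 (max M ‖α‖) ∩ Λ).Finite :=
    hΛ ▸ ZSpan.setFinite_inter b isBounded_closedBall
  have hmaps : MapsTo T Λ Λ := hTΛ
  exact exists_iterate_add_eq_of_forall_iterate_mem hfinite fun k =>
    ⟨mem_closedBall_zero_iff.mpr (norm_iterate_le_max hmaps hmax hα k), hmaps.iterate k hα⟩

/-- With a finite digit set `D` and `‖Φ⁻¹‖ < 1`, the map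
`T(β) = Φ⁻¹(β - d(β))` is norm-decreasing outside the ball of radius `M` and
maps that ball into itself; consequently every orbit `(T^k(α))` is eventually
periodic. -/
theorem finite_digit_set_orbit_eventually_periodic
    {E : Type*} [NormedAddCommGroup E] [NormedSpace ℝ E] [FiniteDimensional ℝ E]
    {n : ℕ} (b : Module.Basis (Fin n) ℝ E)
    (Λ : Set E) (hΛ : Λ = ↑(Submodule.span ℤ (Set.range ⇑b)))
    (Φ : E ≃ₗ[ℝ] E) (hΦΛ : ∀ x ∈ Λ, Φ x ∈ Λ)
    (q : ℝ) (hq : q = ‖LinearMap.toContinuousLinearMap (Φ.symm : E →ₗ[ℝ] E)‖)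
    (hq1 : q < 1)
    (D : Finset E) (hDΛ : ↑D ⊆ Λ) (hD0 : (0 : E) ∈ D)
    (Mt M : ℝ)
    (hMt : Mt = D.sup' ⟨0, hD0⟩ (fun η => ‖η‖))
    (hM : M = q / (1 - q) * Mt)
    (d T : E → E)
    (hdD : ∀ α ∈ Λ, d α ∈ D)
    (hT : ∀ α : E, Φ (T α) = α - d α)
    (hTΛ : ∀ α ∈ Λ, T α ∈ Λ) :
    (∀ β ∈ Λ, (M < ‖β‖ → ‖T β‖ < ‖β‖) ∧ (‖β‖ ≤ M → ‖T β‖ ≤ M)) ∧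
      (∀ α ∈ Λ, ∃ (i p : ℕ), 0 < p ∧ ∀ k : ℕ, i ≤ k → T^[k + p] α = T^[k] α) :=
  finite_digit_set_orbit_eventually_periodic_general b Λ hΛ Φ q hq hq1 D hD0 Mt M hMt hM d T hdD hT
    hTΛ
end

section
/- In the setting of the minimal norm digit set theorem: let Λ, Φ, ‖·‖, V, D be as there with ‖Φ^{−1}‖^w < 1/2. Let P := {β ∈ Λ : β ∉ Φ(Λ) and (T^k(β))_{k≥0} is purely periodic}, where T(β) = Φ^{−1}(β − d(β)). If α ∈ P maximizes ‖Φ^{−w}(α)‖ over P, with period ℓ > 0 (T^ℓ(α) = α) and digits η_k = d(T^k(α)) whose non-zero positions form a set N ⊆ {0,…,ℓ−1} with all pairwise gaps at least w, then Φ^{−w}(α) = (id − Φ^{−ℓ})^{−1}(−∑_{k∈N, k<ℓ} Φ^{k−ℓ}(Φ^{−w}(η_k))), and for each k ∈ N one has ‖Φ^{−w}(η_k)‖ ≤ ‖Φ^{−w}(T^k(α))‖ ≤ ‖Φ^{−w}(α)‖. -/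
/-!
Unrolling `Φ (T β) = β - d β` along the orbit gives
`Φ^m (T^[m] α) = α - ∑_{k<m} Φ^k (d (T^[k] α))`; at `m = ℓ` periodicity turns this into the
identity, the digits vanishing off `N`. For `k ∈ N` the point `T^[k] α` lies in `P` again, so
maximality of `α` gives the second inequality, while `Φ^{-w} (T^[k] α)` differs from
`Φ^{-w} η_k ∈ V` by a lattice vector, which gives the first.
-/

open Finset

section OrbitExpansion

variable {R M : Type*} [Semiring R] [AddCommGroup M] [Module R M] {Φ : M ≃ₗ[R] M} {d T : M → M}

theorem pow_apply_iterate_eq_sub_sum (hT : ∀ x, Φ (T x) = x - d x) (m : ℕ) (x : M) :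
    (Φ ^ m) (T^[m] x) = x - ∑ k ∈ range m, (Φ ^ k) (d (T^[k] x)) := by
  induction m with
  | zero => simp
  | succ m ih =>
    rw [Function.iterate_succ_apply', pow_succ, LinearEquiv.mul_apply, hT, map_sub, ih,
      sum_range_succ]
    abel

theorem zpow_sub_zpow_neg_apply_of_iterate_eq (hT : ∀ x, Φ (T x) = x - d x) {ℓ : ℕ} {x : M}
    (hx : T^[ℓ] x = x) (j : ℤ) :
    (Φ ^ j) x - (Φ ^ (-(ℓ : ℤ))) ((Φ ^ j) x)
      = -∑ k ∈ range ℓ, (Φ ^ ((k : ℤ) - ℓ)) ((Φ ^ j) (d (T^[k] x))) := by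
  have h := congrArg (Φ ^ (j - ℓ)) (pow_apply_iterate_eq_sub_sum hT ℓ x)
  simp only [hx, map_sub, map_sum, ← zpow_natCast, ← LinearEquiv.mul_apply, ← zpow_add,
    sub_add_cancel] at h ⊢
  rw [h, neg_add_eq_sub, sub_sub_cancel_left]
  refine congrArg Neg.neg (sum_congr rfl fun k _ => ?_)
  rw [show j - ℓ + k = k - ℓ + j by ring]

end OrbitExpansion

theorem norm_symm_le_of_sub_mem_image {R E : Type*} [Semiring R] [SeminormedAddCommGroup E]
    [Module R E] {Λ : Set E} {Ψ : E ≃ₗ[R] E} {δ β : E}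
    (hδ : ∀ γ ∈ Λ, ‖Ψ.symm δ‖ ≤ ‖Ψ.symm δ + γ‖) (hβ : β - δ ∈ Ψ '' Λ) :
    ‖Ψ.symm δ‖ ≤ ‖Ψ.symm β‖ := by
  obtain ⟨γ, hγ, hγβ⟩ := hβ
  have : Ψ.symm β = Ψ.symm δ + γ := by
    rw [← sub_eq_iff_eq_add', ← map_sub, ← hγβ, LinearEquiv.symm_apply_apply]
  exact this ▸ hδ γ hγ

theorem minimal_norm_periodic_orbit_identity_general
    {E : Type*} [NormedAddCommGroup E] [NormedSpace ℝ E]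
    (Λ : Set E) (Φ : E ≃ₗ[ℝ] E) (w : ℕ)
    (V : Set E) (hV : V = {z : E | ∀ α ∈ Λ, ‖z‖ ≤ ‖z + α‖})
    (Dbul : Set E)
    (hDV : Dbul ⊆ {α ∈ Λ | (Φ ^ w).symm α ∈ V})
    (d T : E → E)
    (hd0 : ∀ α ∈ Λ, α ∈ ⇑Φ '' Λ → d α = 0)
    (hd : ∀ α ∈ Λ, α ∉ ⇑Φ '' Λ → d α ∈ Dbul ∧ α - d α ∈ ⇑(Φ ^ w) '' Λ)
    (hT : ∀ α : E, Φ (T α) = α - d α)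
    (hTΛ : ∀ α ∈ Λ, T α ∈ Λ)
    (P : Set E)
    (hP : P = {β ∈ Λ | β ∉ ⇑Φ '' Λ ∧ ∃ p : ℕ, 0 < p ∧ T^[p] β = β})
    (α : E) (hα : α ∈ P)
    (hαmax : ∀ β ∈ P, ‖(Φ ^ (-(w : ℤ))) β‖ ≤ ‖(Φ ^ (-(w : ℤ))) α‖)
    (ℓ : ℕ) (hℓ : 0 < ℓ) (hTℓ : T^[ℓ] α = α)
    (N : Finset ℕ) (hN : ∀ k : ℕ, k ∈ N ↔ k < ℓ ∧ d (T^[k] α) ≠ 0) :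
    ((Φ ^ (-(w : ℤ))) α - (Φ ^ (-(ℓ : ℤ))) ((Φ ^ (-(w : ℤ))) α)
        = -∑ k ∈ N, (Φ ^ ((k : ℤ) - (ℓ : ℤ))) ((Φ ^ (-(w : ℤ))) (d (T^[k] α)))) ∧
      (∀ k ∈ N,
        ‖(Φ ^ (-(w : ℤ))) (d (T^[k] α))‖ ≤ ‖(Φ ^ (-(w : ℤ))) (T^[k] α)‖ ∧
        ‖(Φ ^ (-(w : ℤ))) (T^[k] α)‖ ≤ ‖(Φ ^ (-(w : ℤ))) α‖) := by
  classical
  subst hP hV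
  obtain ⟨hαΛ, -, -⟩ := hα
  have hzpow_neg : ∀ y, (Φ ^ (-(w : ℤ))) y = (Φ ^ w).symm y := fun y => by
    rw [zpow_neg, zpow_natCast, LinearEquiv.coe_inv]
  have hN_filter : N = (range ℓ).filter fun k => d (T^[k] α) ≠ 0 := by
    ext k
    simp [hN]
  refine ⟨?_, fun k hk => ?_⟩
  · rw [zpow_sub_zpow_neg_apply_of_iterate_eq hT hTℓ, hN_filter, sum_filter_of_ne]
    intro k _ hk
    contrapose! hk
    simp [hk]
  · have hdk := ((hN k).1 hk).2
    have hβΛ : T^[k] α ∈ Λ := Set.MapsTo.iterate (fun x hx => hTΛ x hx) k hαΛ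
    have hβ : T^[k] α ∉ Φ '' Λ := fun h => hdk (hd0 _ hβΛ h)
    have hβper : Function.IsPeriodicPt T ℓ (T^[k] α) := Function.IsPeriodicPt.apply_iterate hTℓ k
    obtain ⟨hdD, hdsub⟩ := hd _ hβΛ hβ
    refine ⟨?_, hαmax _ ⟨hβΛ, hβ, ℓ, hℓ, hβper⟩⟩
    rw [hzpow_neg, hzpow_neg]
    exact norm_symm_le_of_sub_mem_image (hDV hdD).2 hdsub

/-- In the proof of Theorem 5.2: for a maximiser `α` of `‖Φ^{-w}(·)‖` on the
set `P` of purely periodic points not in `Φ(Λ)`, with period `ℓ` and non-zero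
digit positions `N`, one has
`(id - Φ^{-ℓ})(Φ^{-w} α) = -∑_{k ∈ N} Φ^{k-ℓ}(Φ^{-w} η_k)` and
`‖Φ^{-w} η_k‖ ≤ ‖Φ^{-w} T^k(α)‖ ≤ ‖Φ^{-w} α‖` for all `k ∈ N`. -/
theorem minimal_norm_periodic_orbit_identity
    {E : Type*} [NormedAddCommGroup E] [NormedSpace ℝ E] [FiniteDimensional ℝ E]
    {n : ℕ} (b : Module.Basis (Fin n) ℝ E)
    (Λ : Set E) (hΛ : Λ = ↑(Submodule.span ℤ (Set.range ⇑b)))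
    (Φ : E ≃ₗ[ℝ] E) (hΦΛ : ∀ x ∈ Λ, Φ x ∈ Λ)
    (q : ℝ) (hq : q = ‖LinearMap.toContinuousLinearMap (Φ.symm : E →ₗ[ℝ] E)‖)
    (w : ℕ) (hw : 1 ≤ w) (hq1 : q ^ w < 1 / 2)
    (V : Set E) (hV : V = {z : E | ∀ α ∈ Λ, ‖z‖ ≤ ‖z + α‖})
    (Dbul : Set E)
    (hDV : Dbul ⊆ {α ∈ Λ | (Φ ^ w).symm α ∈ V})
    (hDnot : ∀ δ ∈ Dbul, δ ∉ ⇑Φ '' Λ)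
    (hDrep : ∀ α ∈ Λ, α ∉ ⇑Φ '' Λ →
      ∃! δ, δ ∈ Dbul ∧ α - δ ∈ ⇑(Φ ^ w) '' Λ)
    (d T : E → E)
    (hd0 : ∀ α ∈ Λ, α ∈ ⇑Φ '' Λ → d α = 0)
    (hd : ∀ α ∈ Λ, α ∉ ⇑Φ '' Λ → d α ∈ Dbul ∧ α - d α ∈ ⇑(Φ ^ w) '' Λ)
    (hT : ∀ α : E, Φ (T α) = α - d α)
    (hTΛ : ∀ α ∈ Λ, T α ∈ Λ)
    (P : Set E)
    (hP : P = {β ∈ Λ | β ∉ ⇑Φ '' Λ ∧ ∃ p : ℕ, 0 < p ∧ T^[p] β = β})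
    (α : E) (hα : α ∈ P)
    (hαmax : ∀ β ∈ P, ‖(Φ ^ (-(w : ℤ))) β‖ ≤ ‖(Φ ^ (-(w : ℤ))) α‖)
    (ℓ : ℕ) (hℓ : 0 < ℓ) (hTℓ : T^[ℓ] α = α)
    (N : Finset ℕ) (hN : ∀ k : ℕ, k ∈ N ↔ k < ℓ ∧ d (T^[k] α) ≠ 0)
    (hNgap : ∀ k ∈ N, ∀ k' ∈ N, k < k' → k + w ≤ k') :
    ((Φ ^ (-(w : ℤ))) α - (Φ ^ (-(ℓ : ℤ))) ((Φ ^ (-(w : ℤ))) α)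
        = -∑ k ∈ N, (Φ ^ ((k : ℤ) - (ℓ : ℤ))) ((Φ ^ (-(w : ℤ))) (d (T^[k] α)))) ∧
      (∀ k ∈ N,
        ‖(Φ ^ (-(w : ℤ))) (d (T^[k] α))‖ ≤ ‖(Φ ^ (-(w : ℤ))) (T^[k] α)‖ ∧
        ‖(Φ ^ (-(w : ℤ))) (T^[k] α)‖ ≤ ‖(Φ ^ (-(w : ℤ))) α‖) :=
  minimal_norm_periodic_orbit_identity_general Λ Φ w V hV Dbul hDV d T hd0 hd hT hTΛ P hP α hα hαmax
    ℓ hℓ hTℓ N hN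
end

section
/- Let ‖·‖ be a norm on ℝ^n with induced operator norm, Φ an invertible linear map, and r, R > 0 with {‖x‖ ≤ r} ⊆ V ⊆ {‖x‖ ≤ R}. If ‖Φ^{−1}‖ < r/R and w is a positive integer with ‖Φ^{−1}‖^w < (1/2)(r/R − ‖Φ^{−1}‖), then Φ^{−1}(V) + Φ^{−w}(V) + Φ^{−w}(V) ⊆ int V, where the sum denotes the Minkowski sum of sets. -/
/-- The key geometric inclusion in the proof of optimality (Theorem 6.5):
if `{‖x‖ ≤ r} ⊆ V ⊆ {‖x‖ ≤ R}`, `‖Φ⁻¹‖ < r/R` and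
`‖Φ⁻¹‖^w < (1/2)(r/R - ‖Φ⁻¹‖)`, then
`Φ⁻¹(V) + Φ^{-w}(V) + Φ^{-w}(V) ⊆ int V`. -/
theorem minkowski_sum_subset_interior
    {E : Type*} [NormedAddCommGroup E] [NormedSpace ℝ E] [FiniteDimensional ℝ E]
    (Φ : E ≃ₗ[ℝ] E)
    (q : ℝ) (hq : q = ‖LinearMap.toContinuousLinearMap (Φ.symm : E →ₗ[ℝ] E)‖)
    (r R : ℝ) (hr : 0 < r) (hR : 0 < R)
    (V : Set E) (hrV : {x : E | ‖x‖ ≤ r} ⊆ V) (hVR : V ⊆ {x : E | ‖x‖ ≤ R})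
    (hqrR : q < r / R)
    (w : ℕ) (hw : 1 ≤ w)
    (hbound : q ^ w < 1 / 2 * (r / R - q)) :
    ∀ x ∈ V, ∀ y ∈ V, ∀ z ∈ V,
      Φ.symm x + (Φ ^ w).symm y + (Φ ^ w).symm z ∈ interior V := by
  have hq0 : 0 ≤ q := hq ▸ norm_nonneg _
  have hT : ∀ v : E, ‖Φ.symm v‖ ≤ q * ‖v‖ := by
    intro v
    rw [hq]
    exact (LinearMap.toContinuousLinearMap (Φ.symm : E →ₗ[ℝ] E)).le_opNorm v
  have hTn : ∀ (n : ℕ) (v : E), ‖(Φ ^ n).symm v‖ ≤ q ^ n * ‖v‖ := by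
    intro n
    induction n with
    | zero => intro v; simp only [pow_zero, one_mul]; exact le_of_eq rfl
    | succ n ih =>
      intro v
      have h1 : (Φ ^ (n + 1)).symm v = Φ.symm ((Φ ^ n).symm v) := by
        rw [pow_succ]
        rfl
      rw [h1]
      calc ‖Φ.symm ((Φ ^ n).symm v)‖ ≤ q * ‖(Φ ^ n).symm v‖ := hT _
        _ ≤ q * (q ^ n * ‖v‖) := by
            exact mul_le_mul_of_nonneg_left (ih v) hq0
        _ = q ^ (n + 1) * ‖v‖ := by ring
  intro x hx y hy z hz
  have hxR : ‖x‖ ≤ R := hVR hx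
  have hyR : ‖y‖ ≤ R := hVR hy
  have hzR : ‖z‖ ≤ R := hVR hz
  have h1 : ‖Φ.symm x‖ ≤ q * R :=
    (hT x).trans (mul_le_mul_of_nonneg_left hxR hq0)
  have hqw0 : 0 ≤ q ^ w := pow_nonneg hq0 w
  have h2 : ‖(Φ ^ w).symm y‖ ≤ q ^ w * R :=
    (hTn w y).trans (mul_le_mul_of_nonneg_left hyR hqw0)
  have h3 : ‖(Φ ^ w).symm z‖ ≤ q ^ w * R :=
    (hTn w z).trans (mul_le_mul_of_nonneg_left hzR hqw0)
  have hball : Metric.ball (0 : E) r ⊆ interior V := by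
    apply interior_maximal _ Metric.isOpen_ball
    intro v hv
    exact hrV (le_of_lt (by simpa using hv))
  apply hball
  simp only [Metric.mem_ball, dist_zero_right]
  calc ‖Φ.symm x + (Φ ^ w).symm y + (Φ ^ w).symm z‖
      ≤ ‖Φ.symm x‖ + ‖(Φ ^ w).symm y‖ + ‖(Φ ^ w).symm z‖ := norm_add₃_le
    _ ≤ q * R + q ^ w * R + q ^ w * R := by linarith
    _ < r := by
        have h1 : q * R < r := (lt_div_iff₀ hR).mp hqrR
        have h2 : r / R * R = r := div_mul_cancel₀ r hR.ne'
        nlinarith [mul_lt_mul_of_pos_right hbound hR]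
end

section
/- Let Λ ⊆ ℝ^n be a lattice, Φ an expanding injective endomorphism of ℝ^n with Φ(Λ) ⊆ Λ, and V ⊆ ℝ^n a set tiling ℝ^n by Λ with V ⊆ Φ(V) and V = −V. Suppose there are a vector norm ‖·‖ on ℝ^n and reals r, R > 0 with {x : ‖x‖ ≤ r} ⊆ V ⊆ {x : ‖x‖ ≤ R} and ‖Φ^{−1}‖ < r/R for the induced operator norm. Let w be a positive integer with ‖Φ^{−1}‖^w < (1/2)(r/R − ‖Φ^{−1}‖), and let D = D• ∪ {0} be a tiling-based digit set (D• ⊆ {α ∈ Λ : Φ^{−w}(α) ∈ V}, one representative per residue class mod Φ^w(Λ) not in Φ(Λ)). If D is a w-NADS, then for every α ∈ Λ the D-w-NAF expansion of α is optimal: its Hamming weight is at most the Hamming weight of any word over D with value α. -/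
/-!
Every word over `D` can be rewritten into a `w`-NAF of no larger weight, and all `w`-NAFs of an
element have the same weight, since the lowest non-zero digit of a NAF is the unique digit
congruent to its value modulo `Φ^w(Λ)`.

The rewriting feeds the letters of the word, starting from the most significant one, as carries
into a NAF of the more significant part. A carry is a digit or a lattice point `u` with
`‖Φ^{-w} u‖ < r`. Adding a carry `u` to a NAF whose lowest window of `w` letters has value
`Φ^i a`, and replacing that window by the digit `δ` of the sum, leaves the carry
`Φ^{-w}(Φ^i a + u - δ)` for the rest; it is small again because `‖Φ⁻¹‖ R + 2 ‖Φ⁻¹‖^w R < r`, and it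
vanishes unless both `a` and `u` are non-zero, so the weight grows by at most that of `u`. A carry
that reaches the end of the NAF is a power of `Φ` applied to a digit (Lemmas 6.2 and 6.4).
-/

open scoped Classical
open Filter Topology

namespace WNAF

variable {R E : Type*}

section Words

variable [Semiring R] [AddCommMonoid E] [Module R E] (Φ : E ≃ₗ[R] E)

theorem pow_apply_pow_apply (a b : ℕ) (x : E) : (Φ ^ a) ((Φ ^ b) x) = (Φ ^ (a + b)) x := by
  rw [pow_add, LinearEquiv.mul_apply]

theorem pow_apply_comm (a b : ℕ) (x : E) : (Φ ^ a) ((Φ ^ b) x) = (Φ ^ b) ((Φ ^ a) x) := by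
  rw [pow_apply_pow_apply, pow_apply_pow_apply, add_comm]

theorem symm_pow_apply_pow {i k : ℕ} (h : i ≤ k) (x : E) :
    (Φ ^ k).symm ((Φ ^ i) x) = (Φ ^ (k - i)).symm x := by
  obtain ⟨m, rfl⟩ := Nat.exists_eq_add_of_le h
  rw [LinearEquiv.symm_apply_eq, ← pow_apply_pow_apply, Nat.add_sub_cancel_left,
    LinearEquiv.apply_symm_apply]

theorem symm_pow_pow_apply_comm (i k : ℕ) (x : E) :
    (Φ ^ k).symm ((Φ ^ i) x) = (Φ ^ i) ((Φ ^ k).symm x) := by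
  rw [LinearEquiv.symm_apply_eq, pow_apply_pow_apply, add_comm, ← pow_apply_pow_apply,
    LinearEquiv.apply_symm_apply]

noncomputable def val : List E → E
  | [] => 0
  | a :: l => a + Φ (val l)

@[simp] theorem val_nil : val Φ [] = 0 := rfl

@[simp] theorem val_cons (a : E) (l : List E) : val Φ (a :: l) = a + Φ (val Φ l) := rfl

@[simp] theorem val_replicate_zero (k : ℕ) : val Φ (List.replicate k 0) = 0 := by
  induction k with
  | zero => rfl
  | succ k ih => simp [List.replicate_succ, ih]

@[simp] theorem val_replicate_zero_append (k : ℕ) (l : List E) :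
    val Φ (List.replicate k 0 ++ l) = (Φ ^ k) (val Φ l) := by
  induction k with
  | zero => simp
  | succ k ih => simp [List.replicate_succ, ih, pow_succ']

theorem val_digit_block {w : ℕ} (hw : 1 ≤ w) (d : E) (l : List E) :
    val Φ (d :: (List.replicate (w - 1) 0 ++ l)) = d + (Φ ^ w) (val Φ l) := by
  rw [val_cons, val_replicate_zero_append, ← LinearEquiv.mul_apply, ← pow_succ',
    Nat.sub_add_cancel hw]

theorem val_ofFn {ℓ : ℕ} (η : Fin ℓ → E) :
    val Φ (List.ofFn η) = ∑ j : Fin ℓ, (Φ ^ (j : ℕ)) (η j) := by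
  induction ℓ with
  | zero => simp
  | succ ℓ ih => simp [List.ofFn_succ, ih, Fin.sum_univ_succ, map_sum, pow_succ']

theorem val_eq_pow_apply_val_drop {k : ℕ} {l : List E} (h : ∀ i < k, l.getD i 0 = 0) :
    val Φ l = (Φ ^ k) (val Φ (l.drop k)) := by
  induction k generalizing l with
  | zero => simp
  | succ k ih =>
    cases l with
    | nil => simp
    | cons a l =>
      obtain rfl : a = 0 := h 0 k.succ_pos
      simp [ih fun i hi => h (i + 1) (by omega), pow_succ']

end Words

section Weight

variable [Zero E]

noncomputable def weight (l : List E) : ℕ := l.countP (· ≠ 0)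

@[simp] theorem weight_nil : weight ([] : List E) = 0 := rfl

@[simp] theorem weight_cons (a : E) (l : List E) :
    weight (a :: l) = (if a = 0 then 0 else 1) + weight l := by
  by_cases ha : a = 0 <;> simp [weight, ha, add_comm]

theorem weight_singleton (a : E) : weight [a] = if a = 0 then 0 else 1 := by simp

theorem weight_singleton_le_one (a : E) : weight [a] ≤ 1 := by
  rw [weight_singleton]; split_ifs <;> omega

@[simp] theorem weight_replicate_zero (k : ℕ) : weight (List.replicate k (0 : E)) = 0 := by
  simp [weight, List.countP_replicate]

@[simp] theorem weight_replicate_zero_append (k : ℕ) (l : List E) :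
    weight (List.replicate k 0 ++ l) = weight l := by
  simp [weight, List.countP_append, List.countP_replicate]

theorem weight_ofFn {ℓ : ℕ} (η : Fin ℓ → E) :
    weight (List.ofFn η) = (Finset.univ.filter fun j => η j ≠ 0).card := by
  induction ℓ with
  | zero => rfl
  | succ ℓ ih =>
    rw [List.ofFn_succ, weight_cons, ih, Finset.card_filter, Finset.card_filter,
      Fin.sum_univ_succ]
    simp

theorem weight_eq_weight_drop {k : ℕ} {l : List E} (h : ∀ i < k, l.getD i 0 = 0) :
    weight l = weight (l.drop k) := by
  induction k generalizing l with
  | zero => simp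
  | succ k ih =>
    cases l with
    | nil => simp
    | cons a l =>
      obtain rfl : a = 0 := h 0 k.succ_pos
      simp [ih fun i hi => h (i + 1) (by omega)]

/-- A word whose last non-zero letter is followed by fewer than `w - 1` zeros is a NAF only
after padding, which changes neither its value nor its weight. -/
inductive IsNAF (w : ℕ) (D : Set E) : List E → Prop
  | nil : IsNAF w D []
  | zero_cons {l : List E} : IsNAF w D l → IsNAF w D (0 :: l)
  | digit_cons {d : E} {l : List E} :
      d ∈ D → IsNAF w D l → IsNAF w D (d :: (List.replicate (w - 1) 0 ++ l))

variable {w : ℕ} {D : Set E}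

theorem IsNAF.replicate_zero_append {l : List E} (h : IsNAF w D l) (k : ℕ) :
    IsNAF w D (List.replicate k 0 ++ l) := by
  induction k with
  | zero => exact h
  | succ k ih => exact ih.zero_cons

theorem IsNAF.exists_eq_replicate_zero_append {l : List E} (h : IsNAF w D l) :
    ∃ j ρ, l = List.replicate j 0 ++ ρ ∧
      (ρ = [] ∨ ∃ d T, d ∈ D ∧ IsNAF w D T ∧ ρ = d :: (List.replicate (w - 1) 0 ++ T)) := by
  induction h with
  | nil => exact ⟨0, [], rfl, Or.inl rfl⟩
  | zero_cons _ ih =>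
    obtain ⟨j, ρ, rfl, hρ⟩ := ih
    exact ⟨j + 1, ρ, rfl, hρ⟩
  | digit_cons hd hT => exact ⟨0, _, rfl, Or.inr ⟨_, _, hd, hT, rfl⟩⟩

end Weight

section NAF

variable [Semiring R] [AddCommMonoid E] [Module R E] (Φ : E ≃ₗ[R] E) {w : ℕ} {D : Set E}

theorem IsNAF.exists_window (hw : 1 ≤ w) {θ : List E} (h : IsNAF w D θ) (hne : θ ≠ []) :
    ∃ i < w, ∃ a ∈ insert 0 D, ∃ T, IsNAF w D T ∧ T.length < θ.length ∧
      val Φ θ = (Φ ^ i) a + (Φ ^ w) (val Φ T) ∧ weight θ = weight [a] + weight T := by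
  obtain ⟨j, ρ, rfl, rfl | ⟨d, T, hd, hT, rfl⟩⟩ := h.exists_eq_replicate_zero_append
  · refine ⟨0, hw, 0, Set.mem_insert _ _, [], .nil, ?_, by simp, by simp⟩
    simpa [Nat.pos_iff_ne_zero] using hne
  rcases lt_or_ge j w with hj | hj
  · refine ⟨j, hj, d, Set.mem_insert_of_mem _ hd, List.replicate j 0 ++ T,
      hT.replicate_zero_append j, by simp, ?_, by simp⟩
    rw [val_replicate_zero_append, val_digit_block Φ hw, map_add, val_replicate_zero_append,
      pow_apply_pow_apply, pow_apply_pow_apply, add_comm j]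
  · refine ⟨0, hw, 0, Set.mem_insert _ _, List.replicate (j - w) 0 ++ _,
      (hT.digit_cons hd).replicate_zero_append _, by simp; omega, ?_, by simp⟩
    rw [val_replicate_zero_append, val_replicate_zero_append, pow_apply_pow_apply,
      Nat.add_sub_cancel' hj]
    simp

theorem exists_isNAF_of_getD (hw : 1 ≤ w) : ∀ (l : List E), (∀ a ∈ l, a ∈ insert 0 D) →
    (∀ i j, i < j → j < i + w → l.getD i 0 ≠ 0 → l.getD j 0 = 0) →
    ∃ l', IsNAF w D l' ∧ val Φ l' = val Φ l ∧ weight l' = weight l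
  | [], _, _ => ⟨[], .nil, rfl, rfl⟩
  | a :: t, hD, hnaf => by
    have htD : ∀ b ∈ t, b ∈ insert 0 D := fun b hb => hD b (List.mem_cons_of_mem a hb)
    have htnaf : ∀ i j, i < j → j < i + w → t.getD i 0 ≠ 0 → t.getD j 0 = 0 :=
      fun i j hij hji => hnaf (i + 1) (j + 1) (by omega) (by omega)
    rcases eq_or_ne a 0 with rfl | ha
    · obtain ⟨t', ht', hval, hwt⟩ := exists_isNAF_of_getD hw t htD htnaf
      exact ⟨0 :: t', ht'.zero_cons, by simp [hval], by simp [weight_cons, hwt]⟩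
    have hzero : ∀ i < w - 1, t.getD i 0 = 0 := fun i hi => hnaf 0 (i + 1) (by omega) (by omega) ha
    obtain ⟨T, hT, hval, hwt⟩ := exists_isNAF_of_getD hw (t.drop (w - 1))
      (fun b hb => htD b (List.mem_of_mem_drop hb))
      (fun i j hij hji => by simpa using htnaf (w - 1 + i) (w - 1 + j) (by omega) (by omega))
    refine ⟨a :: (List.replicate (w - 1) 0 ++ T),
      hT.digit_cons ((Set.mem_insert_iff.1 (hD a List.mem_cons_self)).resolve_left ha), ?_, ?_⟩
    · rw [val_digit_block Φ hw, val_cons, val_eq_pow_apply_val_drop Φ hzero, hval,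
        ← LinearEquiv.mul_apply, ← pow_succ', Nat.sub_add_cancel hw]
    · rw [weight_cons, weight_replicate_zero_append, hwt, weight_cons,
        ← weight_eq_weight_drop hzero]
termination_by l => l.length

theorem exists_isNAF_ofFn (hw : 1 ≤ w) {ℓ : ℕ} (η : Fin ℓ → E) (hD : ∀ j, η j ∈ insert 0 D)
    (hη : ∀ i j : Fin ℓ, (i : ℕ) < j → (j : ℕ) < i + w → η i ≠ 0 → η j = 0) :
    ∃ l, IsNAF w D l ∧ val Φ l = ∑ j : Fin ℓ, (Φ ^ (j : ℕ)) (η j) ∧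
      weight l = (Finset.univ.filter fun j => η j ≠ 0).card := by
  rw [← val_ofFn, ← weight_ofFn]
  refine exists_isNAF_of_getD Φ hw _ (by simpa [List.mem_ofFn] using hD) fun i j hij hji => ?_
  simp only [List.getD_eq_getElem?_getD, List.getElem?_ofFn]
  split_ifs with hi hj
  · exact hη ⟨i, hi⟩ ⟨j, hj⟩ hij hji
  · exact fun _ => rfl
  · exact absurd (hij.trans ‹j < ℓ›) hi
  · exact fun _ => rfl

end NAF

structure DigitSystem (R E : Type*) [Ring R] [AddCommGroup E] [Module R E] where
  Φ : E ≃ₗ[R] E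
  Λ : AddSubgroup E
  w : ℕ
  D : Set E
  one_le_w : 1 ≤ w
  map_mem : ∀ x ∈ Λ, Φ x ∈ Λ
  D_subset : D ⊆ Λ
  notMem_image : ∀ d ∈ D, d ∉ Φ '' Λ
  existsUnique_digit : ∀ α ∈ Λ, α ∉ Φ '' Λ → ∃! δ, δ ∈ D ∧ α - δ ∈ (Φ ^ w) '' Λ

namespace DigitSystem

section Algebraic

variable [Ring R] [AddCommGroup E] [Module R E] (S : DigitSystem R E)

def powImage (k : ℕ) : AddSubgroup E := S.Λ.map ((S.Φ ^ k : E ≃ₗ[R] E) : E →+ E)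

theorem coe_powImage (k : ℕ) : (S.powImage k : Set E) = (S.Φ ^ k) '' S.Λ :=
  AddSubgroup.coe_map _ _

theorem w_ne_zero : S.w ≠ 0 := Nat.one_le_iff_ne_zero.1 S.one_le_w

variable {S}

theorem mem_powImage {k : ℕ} {x : E} : x ∈ S.powImage k ↔ ∃ y ∈ S.Λ, (S.Φ ^ k) y = x := by
  simp [powImage]

theorem mem_powImage_one {x : E} : x ∈ S.powImage 1 ↔ ∃ y ∈ S.Λ, S.Φ y = x := by
  simp [mem_powImage]

theorem pow_apply_mem {x : E} (hx : x ∈ S.Λ) (k : ℕ) : (S.Φ ^ k) x ∈ S.Λ := by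
  induction k with
  | zero => exact hx
  | succ k ih => rw [pow_succ', LinearEquiv.mul_apply]; exact S.map_mem _ ih

theorem pow_apply_mem_powImage {x : E} (hx : x ∈ S.Λ) (k : ℕ) : (S.Φ ^ k) x ∈ S.powImage k :=
  mem_powImage.2 ⟨x, hx, rfl⟩

theorem powImage_le {j k : ℕ} (h : j ≤ k) : S.powImage k ≤ S.powImage j := by
  rintro _ ⟨y, hy, rfl⟩
  obtain ⟨m, rfl⟩ := Nat.exists_eq_add_of_le h
  exact mem_powImage.2 ⟨(S.Φ ^ m) y, pow_apply_mem hy m, by simp [pow_apply_pow_apply]⟩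

theorem pow_apply_mem_powImage_one {x : E} (hx : x ∈ S.Λ) {k : ℕ} (hk : k ≠ 0) :
    (S.Φ ^ k) x ∈ S.powImage 1 :=
  powImage_le (Nat.one_le_iff_ne_zero.2 hk) (pow_apply_mem_powImage hx k)

theorem notMem_powImage_one {d : E} (hd : d ∈ S.D) : d ∉ S.powImage 1 := by
  rw [← SetLike.mem_coe, coe_powImage, pow_one]
  exact S.notMem_image d hd

theorem ne_zero_of_mem_D {d : E} (hd : d ∈ S.D) : d ≠ 0 := by
  rintro rfl
  exact notMem_powImage_one hd (zero_mem _)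

theorem exists_digit {α : E} (hα : α ∈ S.Λ) (h : α ∉ S.powImage 1) :
    ∃ δ ∈ S.D, ∃ z ∈ S.Λ, α = δ + (S.Φ ^ S.w) z := by
  rw [← SetLike.mem_coe, coe_powImage, pow_one] at h
  obtain ⟨δ, ⟨hδ, z, hz, hzδ⟩, -⟩ := S.existsUnique_digit α hα h
  exact ⟨δ, hδ, z, hz, by rw [hzδ]; abel⟩

theorem eq_of_sub_mem_powImage {d d' : E} (hd : d ∈ S.D) (hd' : d' ∈ S.D)
    (h : d - d' ∈ S.powImage S.w) : d = d' := by
  have hd1 := notMem_powImage_one hd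
  rw [← SetLike.mem_coe, coe_powImage, pow_one] at hd1
  rw [← SetLike.mem_coe, coe_powImage] at h
  exact (S.existsUnique_digit d (S.D_subset hd) hd1).unique ⟨hd, 0, zero_mem _, by simp⟩ ⟨hd', h⟩

theorem exists_pow_apply_eq {x : E} (hx : x ∈ S.Λ) (n : ℕ) :
    ∃ k ≤ n, ∃ y ∈ S.Λ, (S.Φ ^ k) y = x ∧ (k < n → y ∉ S.powImage 1) := by
  induction n with
  | zero => exact ⟨0, le_rfl, x, hx, rfl, by omega⟩
  | succ n ih =>
    obtain ⟨k, hk, y, hy, rfl, hy1⟩ := ih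
    rcases hk.lt_or_eq with hk | rfl
    · exact ⟨k, by omega, y, hy, rfl, fun _ => hy1 hk⟩
    by_cases hy1 : y ∈ S.powImage 1
    · obtain ⟨y', hy', rfl⟩ := mem_powImage_one.1 hy1
      exact ⟨k + 1, le_rfl, y', hy', by rw [pow_succ, LinearEquiv.mul_apply], by omega⟩
    · exact ⟨k, by omega, y, hy, rfl, fun _ => hy1⟩

theorem val_mem {l : List E} (h : IsNAF S.w S.D l) : val S.Φ l ∈ S.Λ := by
  induction h with
  | nil => exact zero_mem _
  | zero_cons _ ih => simpa using S.map_mem _ ih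
  | digit_cons hd _ ih =>
    rw [val_digit_block _ S.one_le_w]
    exact add_mem (S.D_subset hd) (pow_apply_mem ih _)

theorem digit_add_notMem_powImage_one {d v : E} (hd : d ∈ S.D) (hv : v ∈ S.Λ) :
    d + (S.Φ ^ S.w) v ∉ S.powImage 1 := fun h =>
  notMem_powImage_one hd <| by
    simpa using sub_mem h (pow_apply_mem_powImage_one hv S.w_ne_zero)

theorem weight_eq_zero_of_val_eq_zero {l : List E} (h : IsNAF S.w S.D l) (hl : val S.Φ l = 0) :
    weight l = 0 := by
  induction h with
  | nil => rfl
  | zero_cons _ ih => simpa using ih (by simpa using hl)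
  | digit_cons hd hT =>
    rw [val_digit_block _ S.one_le_w] at hl
    exact absurd (hl ▸ zero_mem _) (digit_add_notMem_powImage_one hd (val_mem hT))

theorem val_zero_cons_ne_val_digit_cons {t T : List E} {d : E} (ht : IsNAF S.w S.D t)
    (hd : d ∈ S.D) (hT : IsNAF S.w S.D T) :
    val S.Φ (0 :: t) ≠ val S.Φ (d :: (List.replicate (S.w - 1) 0 ++ T)) := by
  rw [val_cons, zero_add, val_digit_block _ S.one_le_w]
  exact fun h => digit_add_notMem_powImage_one hd (val_mem hT)
    (h ▸ mem_powImage_one.2 ⟨_, val_mem ht, rfl⟩)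

theorem weight_eq_of_val_eq {l₁ l₂ : List E} (h₁ : IsNAF S.w S.D l₁) (h₂ : IsNAF S.w S.D l₂)
    (hval : val S.Φ l₁ = val S.Φ l₂) : weight l₁ = weight l₂ := by
  induction h₁ generalizing l₂ with
  | nil => exact (weight_eq_zero_of_val_eq_zero h₂ hval.symm).symm
  | zero_cons ht ih =>
    cases h₂ with
    | nil => exact weight_eq_zero_of_val_eq_zero ht.zero_cons hval
    | zero_cons ht' => simpa using ih ht' (S.Φ.injective (by simpa using hval))
    | digit_cons hd hT => exact absurd hval (val_zero_cons_ne_val_digit_cons ht hd hT)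
  | digit_cons hd hT ih =>
    cases h₂ with
    | nil => exact weight_eq_zero_of_val_eq_zero (hT.digit_cons hd) hval
    | zero_cons ht => exact absurd hval.symm (val_zero_cons_ne_val_digit_cons ht hd hT)
    | digit_cons hd' hT' =>
      rw [val_digit_block _ S.one_le_w, val_digit_block _ S.one_le_w] at hval
      have hdd : _ = _ := eq_of_sub_mem_powImage hd hd' <| mem_powImage.2
        ⟨_, sub_mem (val_mem hT') (val_mem hT), by
          rw [map_sub, sub_eq_sub_iff_add_eq_add, add_comm, hval]⟩
      subst hdd
      simpa using ih hT' ((S.Φ ^ S.w).injective (add_left_cancel hval))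

def HasNAFWeightLE (S : DigitSystem R E) (x : E) (n : ℕ) : Prop :=
  ∃ l, IsNAF S.w S.D l ∧ val S.Φ l = x ∧ weight l ≤ n

theorem hasNAFWeightLE_zero (S : DigitSystem R E) (n : ℕ) : S.HasNAFWeightLE 0 n :=
  ⟨[], .nil, rfl, Nat.zero_le _⟩

theorem HasNAFWeightLE.of_eq_of_le {x y : E} {m n : ℕ} (h : S.HasNAFWeightLE x m) (hxy : x = y)
    (hmn : m ≤ n) : S.HasNAFWeightLE y n :=
  let ⟨l, hl, hval, hwt⟩ := h
  ⟨l, hl, hval.trans hxy, hwt.trans hmn⟩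

theorem HasNAFWeightLE.pow_apply {x : E} {n : ℕ} (h : S.HasNAFWeightLE x n) (k : ℕ) :
    S.HasNAFWeightLE ((S.Φ ^ k) x) n :=
  let ⟨l, hl, hval, hwt⟩ := h
  ⟨_, hl.replicate_zero_append k, by simp [hval], by simpa using hwt⟩

theorem HasNAFWeightLE.digit_add {z δ : E} {n : ℕ} (h : S.HasNAFWeightLE z n) (hδ : δ ∈ S.D) :
    S.HasNAFWeightLE (δ + (S.Φ ^ S.w) z) (n + 1) := by
  obtain ⟨l, hl, hval, hwt⟩ := h
  refine ⟨_, hl.digit_cons hδ, by rw [val_digit_block _ S.one_le_w, hval], ?_⟩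
  simp [ne_zero_of_mem_D hδ]
  omega

theorem HasNAFWeightLE.of_apply {z : E} {n : ℕ} (h : S.HasNAFWeightLE (S.Φ z) n)
    (hz : z ∈ S.Λ) : S.HasNAFWeightLE z n := by
  obtain ⟨l, hl, hval, hwt⟩ := h
  cases hl with
  | nil => exact ⟨[], .nil, (by simpa using hval.symm : z = 0).symm, Nat.zero_le _⟩
  | zero_cons ht => exact ⟨_, ht, S.Φ.injective (by simpa using hval), by simpa using hwt⟩
  | digit_cons hd hT =>
    rw [val_digit_block _ S.one_le_w] at hval
    exact absurd (hval ▸ mem_powImage_one.2 ⟨z, hz, rfl⟩)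
      (digit_add_notMem_powImage_one hd (val_mem hT))

theorem HasNAFWeightLE.of_pow_apply {z : E} {n k : ℕ} (h : S.HasNAFWeightLE ((S.Φ ^ k) z) n)
    (hz : z ∈ S.Λ) : S.HasNAFWeightLE z n := by
  induction k generalizing z with
  | zero => simpa using h
  | succ k ih =>
    rw [pow_succ, LinearEquiv.mul_apply] at h
    exact (ih h (S.map_mem z hz)).of_apply hz

end Algebraic

section Tiling

variable [NormedAddCommGroup E] [NormedSpace ℝ E]

structure IsTilingBased (S : DigitSystem ℝ E) (V : Set E) (q r R : ℝ) : Prop where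
  discreteTopology : DiscreteTopology S.Λ
  norm_symm_le : ∀ x, ‖S.Φ.symm x‖ ≤ q * ‖x‖
  q_nonneg : 0 ≤ q
  q_lt_one : q < 1
  r_pos : 0 < r
  closedBall_subset : {x : E | ‖x‖ ≤ r} ⊆ V
  subset_closedBall : V ⊆ {x : E | ‖x‖ ≤ R}
  mem_frontier : ∀ z ∈ S.Λ, z ≠ 0 → ∀ x ∈ V, x - z ∈ V → x ∈ frontier V
  symm_pow_mem : ∀ d ∈ S.D, (S.Φ ^ S.w).symm d ∈ V
  carry_bound : q * R + 2 * (q ^ S.w * R) < r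

/-- `Φ^w` of the open `r`-ball takes the place of the paper's `Φ^w(int V)`. -/
def IsCarry (S : DigitSystem ℝ E) (r : ℝ) (u : E) : Prop :=
  u ∈ S.Λ ∧ (u ∈ S.D ∨ ‖(S.Φ ^ S.w).symm u‖ < r)

def AbsorbsCarries (S : DigitSystem ℝ E) (r : ℝ) (θ : List E) : Prop :=
  ∀ c, S.IsCarry r c → S.HasNAFWeightLE (val S.Φ θ + c) (weight θ + weight [c])

variable {S : DigitSystem ℝ E} {V : Set E} {q r R : ℝ}

namespace IsTilingBased

theorem norm_symm_pow_le (hS : S.IsTilingBased V q r R) (k : ℕ) (x : E) :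
    ‖(S.Φ ^ k).symm x‖ ≤ q ^ k * ‖x‖ := by
  induction k with
  | zero => simp only [pow_zero, one_mul]; exact le_rfl
  | succ k ih =>
    calc ‖(S.Φ ^ (k + 1)).symm x‖ = ‖S.Φ.symm ((S.Φ ^ k).symm x)‖ := by
          rw [pow_succ]; rfl
      _ ≤ q * (q ^ k * ‖x‖) := (hS.norm_symm_le _).trans (by gcongr; exact hS.q_nonneg)
      _ = q ^ (k + 1) * ‖x‖ := by ring

theorem isCarry_of_mem_insert (hS : S.IsTilingBased V q r R) {a : E} (ha : a ∈ insert 0 S.D) :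
    S.IsCarry r a := by
  rcases ha with rfl | ha
  · exact ⟨zero_mem _, Or.inr (by simpa using hS.r_pos)⟩
  · exact ⟨S.D_subset ha, Or.inl ha⟩

theorem norm_le_of_isCarry (hS : S.IsTilingBased V q r R) {u : E} (hu : S.IsCarry r u) :
    ‖(S.Φ ^ S.w).symm u‖ ≤ R := by
  refine hS.subset_closedBall ?_
  rcases hu.2 with hu | hu
  · exact hS.symm_pow_mem u hu
  · exact hS.closedBall_subset hu.le

/-- Lemma 6.4. Otherwise `Φ^{-w} u` is an interior point of `V` whose translate by a non-zero
lattice vector also lies in `V`. -/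
theorem norm_le_of_mem_insert (hS : S.IsTilingBased V q r R) {a : E} (ha : a ∈ insert 0 S.D) :
    ‖(S.Φ ^ S.w).symm a‖ ≤ R :=
  hS.norm_le_of_isCarry (hS.isCarry_of_mem_insert ha)

theorem mem_D_of_norm_lt (hS : S.IsTilingBased V q r R) {u : E} (hu : u ∈ S.Λ)
    (hu1 : u ∉ S.powImage 1) (hr : ‖(S.Φ ^ S.w).symm u‖ < r) : u ∈ S.D := by
  obtain ⟨δ, hδ, z, hz, rfl⟩ := exists_digit hu hu1
  obtain rfl | hz0 := eq_or_ne z 0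
  · simpa using hδ
  have hint : (S.Φ ^ S.w).symm (δ + (S.Φ ^ S.w) z) ∈ interior V :=
    interior_mono (fun x hx => hS.closedBall_subset (mem_closedBall_zero_iff.1 hx))
      (Metric.ball_subset_interior_closedBall (mem_ball_zero_iff.2 hr))
  have hfr := hS.mem_frontier z hz hz0 _ (interior_subset hint) (by
    simpa using hS.symm_pow_mem δ hδ)
  exact (hfr.2 hint).elim

theorem mem_D_of_isCarry (hS : S.IsTilingBased V q r R) {u : E} (hu : S.IsCarry r u)
    (hu1 : u ∉ S.powImage 1) : u ∈ S.D :=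
  hu.2.elim id (hS.mem_D_of_norm_lt hu.1 hu1)

theorem isCarry_of_apply (hS : S.IsTilingBased V q r R) {u : E} (hu : S.IsCarry r (S.Φ u))
    (hu' : u ∈ S.Λ) : S.IsCarry r u := by
  refine ⟨hu', Or.inr ?_⟩
  rcases hu.2 with hD | hlt
  · exact absurd (mem_powImage_one.2 ⟨u, hu', rfl⟩) (notMem_powImage_one hD)
  have h := symm_pow_pow_apply_comm S.Φ 1 S.w u
  rw [pow_one] at h
  calc ‖(S.Φ ^ S.w).symm u‖ = ‖S.Φ.symm ((S.Φ ^ S.w).symm (S.Φ u))‖ := by simp [h]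
    _ ≤ q * ‖(S.Φ ^ S.w).symm (S.Φ u)‖ := hS.norm_symm_le _
    _ ≤ 1 * ‖(S.Φ ^ S.w).symm (S.Φ u)‖ := by gcongr; exact hS.q_lt_one.le
    _ < r := by simpa using hlt

/-- Lemma 6.2, `⋂ₘ Φ^m(Λ) = {0}`: `Φ⁻¹` contracts and `Λ` is discrete. -/
theorem exists_notMem_powImage (hS : S.IsTilingBased V q r R) {x : E} (hx : x ∈ S.Λ)
    (hx0 : x ≠ 0) : ∃ m, x ∉ S.powImage m := by
  by_contra! h
  have hmem : ∀ m, (S.Φ ^ m).symm x ∈ S.Λ := fun m => by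
    obtain ⟨y, hy, rfl⟩ := mem_powImage.1 (h m)
    simpa using hy
  have := hS.discreteTopology
  have hlim : Tendsto (fun m => (⟨(S.Φ ^ m).symm x, hmem m⟩ : S.Λ)) atTop (𝓝 0) := by
    rw [tendsto_subtype_rng]
    refine squeeze_zero_norm (hS.norm_symm_pow_le · x) ?_
    simpa using (tendsto_pow_atTop_nhds_zero_of_lt_one hS.q_nonneg hS.q_lt_one).mul_const ‖x‖
  rw [nhds_discrete, tendsto_pure] at hlim
  obtain ⟨m, hm⟩ := hlim.exists
  exact hx0 (by simpa using congrArg Subtype.val hm)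

theorem hasNAFWeightLE_of_isCarry (hS : S.IsTilingBased V q r R) {u : E} (hu : S.IsCarry r u) :
    S.HasNAFWeightLE u (weight [u]) := by
  obtain rfl | hu0 := eq_or_ne u 0
  · exact hasNAFWeightLE_zero S _
  obtain ⟨m, hm⟩ := hS.exists_notMem_powImage hu.1 hu0
  induction m generalizing u with
  | zero => exact absurd (mem_powImage.2 ⟨u, hu.1, rfl⟩) hm
  | succ m ih =>
    by_cases hu1 : u ∈ S.powImage 1
    · obtain ⟨u', hu', rfl⟩ := mem_powImage_one.1 hu1
      refine ((ih (hS.isCarry_of_apply hu hu') (by simpa using hu0) fun h => hm ?_).pow_apply 1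
        ).of_eq_of_le (by simp) (by simp)
      obtain ⟨y, hy, rfl⟩ := mem_powImage.1 h
      exact mem_powImage.2 ⟨y, hy, by rw [pow_succ', LinearEquiv.mul_apply]⟩
    · exact ((hasNAFWeightLE_zero S 0).digit_add
        (hS.mem_D_of_isCarry hu hu1)).of_eq_of_le (by simp) (by simp [hu0])

/-- Condition (iii) of the paper, `Φ⁻¹(V) + Φ^{-w}(V) + Φ^{-w}(V) ⊆ int V`, in normed form. -/
theorem isCarry_of_pow_apply_eq (hS : S.IsTilingBased V q r R) {c a y z : E} {i : ℕ}
    (hc : c ∈ S.Λ) (hi : i < S.w) (ha : ‖(S.Φ ^ S.w).symm a‖ ≤ R)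
    (hy : ‖(S.Φ ^ S.w).symm y‖ ≤ R) (hz : ‖(S.Φ ^ S.w).symm z‖ ≤ R)
    (h : (S.Φ ^ S.w) c = (S.Φ ^ i) a + y + z) : S.IsCarry r c := by
  refine ⟨hc, Or.inr ?_⟩
  have hR : 0 ≤ R := (norm_nonneg _).trans ha
  have hq := hS.q_nonneg
  have hc' : (S.Φ ^ S.w).symm c = (S.Φ ^ (S.w - i)).symm ((S.Φ ^ S.w).symm a) +
      (S.Φ ^ S.w).symm ((S.Φ ^ S.w).symm y) + (S.Φ ^ S.w).symm ((S.Φ ^ S.w).symm z) := by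
    rw [← symm_pow_apply_pow S.Φ hi.le, ← symm_pow_pow_apply_comm, ← map_add, ← map_add,
      ← map_add, ← map_add, ← h, LinearEquiv.symm_apply_apply]
  have h1 : ‖(S.Φ ^ (S.w - i)).symm ((S.Φ ^ S.w).symm a)‖ ≤ q * R :=
    (hS.norm_symm_pow_le _ _).trans (mul_le_mul (pow_le_of_le_one hq hS.q_lt_one.le
      (by omega)) ha (norm_nonneg _) hq)
  have h2 := (hS.norm_symm_pow_le S.w ((S.Φ ^ S.w).symm y)).trans
    (mul_le_mul_of_nonneg_left hy (pow_nonneg hq _))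
  have h3 := (hS.norm_symm_pow_le S.w ((S.Φ ^ S.w).symm z)).trans
    (mul_le_mul_of_nonneg_left hz (pow_nonneg hq _))
  rw [hc']
  calc _ ≤ _ := norm_add₃_le
    _ < r := by linarith [hS.carry_bound]

theorem hasNAFWeightLE_zero_cons (hS : S.IsTilingBased V q r R) {t : List E}
    (ht : S.AbsorbsCarries r t) (htΛ : val S.Φ t ∈ S.Λ) {u : E} (hu : S.IsCarry r u)
    (hγ : S.Φ (val S.Φ t) + u ∈ S.powImage 1) :
    S.HasNAFWeightLE (S.Φ (val S.Φ t) + u) (weight t + weight [u]) := by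
  have hu1 : u ∈ S.powImage 1 :=
    ((S.powImage 1).add_mem_cancel_left (mem_powImage_one.2 ⟨_, htΛ, rfl⟩)).1 hγ
  obtain ⟨u', hu', rfl⟩ := mem_powImage_one.1 hu1
  exact ((ht u' (hS.isCarry_of_apply hu hu')).pow_apply 1).of_eq_of_le (by simp) (by simp)

theorem hasNAFWeightLE_digit_block_add (hS : S.IsTilingBased V q r R) {d : E} {T : List E}
    (hd : d ∈ S.D) (hT : S.AbsorbsCarries r T) (hTΛ : val S.Φ T ∈ S.Λ) {u : E}
    (hu : S.IsCarry r u) (hγ : d + (S.Φ ^ S.w) (val S.Φ T) + u ∈ S.powImage 1) :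
    S.HasNAFWeightLE (d + (S.Φ ^ S.w) (val S.Φ T) + u) (1 + weight T + weight [u]) := by
  have hs : d + u ∈ S.powImage 1 := by
    simpa [add_right_comm] using sub_mem hγ (pow_apply_mem_powImage_one hTΛ S.w_ne_zero)
  have hu0 : u ≠ 0 := by
    rintro rfl
    exact notMem_powImage_one hd (by simpa using hs)
  have hwt : weight [u] = 1 := by rw [weight_singleton, if_neg hu0]
  have hdR := hS.norm_le_of_mem_insert (Set.mem_insert_of_mem _ hd)
  have huR := hS.norm_le_of_isCarry hu
  obtain ⟨k, hk, y, hy, hyeq, hy1⟩ := S.exists_pow_apply_eq (add_mem (S.D_subset hd) hu.1) S.w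
  rcases hk.lt_or_eq with hk | rfl
  · -- `Φ^{-k}(d + u) + Φ^{w-k}(val T)` is not divisible by `Φ`; emit its digit after `k` zeros
    have hB : y + (S.Φ ^ (S.w - k)) (val S.Φ T) ∉ S.powImage 1 := fun h => hy1 hk <| by
      simpa using sub_mem h (pow_apply_mem_powImage_one hTΛ (Nat.sub_ne_zero_of_lt hk))
    obtain ⟨δ, hδ, z, hz, hBeq⟩ := exists_digit (add_mem hy (pow_apply_mem hTΛ _)) hB
    have hΦkB : (S.Φ ^ k) δ + (S.Φ ^ k) ((S.Φ ^ S.w) z) = d + u + (S.Φ ^ S.w) (val S.Φ T) := by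
      rw [← map_add, ← hBeq, map_add, hyeq, pow_apply_pow_apply, Nat.add_sub_cancel' hk.le]
    have hc : S.IsCarry r ((S.Φ ^ k) z - val S.Φ T) := by
      refine hS.isCarry_of_pow_apply_eq (sub_mem (pow_apply_mem hz _) hTΛ) hk
        (a := -δ) (by simpa using hS.norm_le_of_mem_insert (Set.mem_insert_of_mem _ hδ)) hdR huR ?_
      rw [map_sub, pow_apply_comm, eq_sub_of_add_eq' hΦkB, map_neg]
      abel
    refine ((((hT _ hc).of_eq_of_le (by abel) le_rfl).of_pow_apply hz).digit_add hδ
      |>.pow_apply k).of_eq_of_le (by rw [map_add, hΦkB]; abel) ?_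
    have := weight_singleton_le_one ((S.Φ ^ k) z - val S.Φ T)
    omega
  · -- `d + u` is divisible by `Φ^w`: carry `Φ^{-w}(d + u)` into `T`
    have hc : S.IsCarry r y := hS.isCarry_of_pow_apply_eq hy (Nat.pos_of_ne_zero S.w_ne_zero)
      hdR huR (z := 0) (by simpa using (norm_nonneg _).trans huR) (by simpa using hyeq)
    refine ((hT y hc).pow_apply S.w).of_eq_of_le (by rw [map_add, hyeq]; abel) ?_
    have := weight_singleton_le_one y
    omega

theorem hasNAFWeightLE_of_notMem (hS : S.IsTilingBased V q r R) {i : ℕ} {a : E} {T : List E}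
    (hi : i < S.w) (ha : a ∈ insert 0 S.D) (hT : S.AbsorbsCarries r T) (hTΛ : val S.Φ T ∈ S.Λ)
    {u : E} (hu : S.IsCarry r u)
    (hγ : (S.Φ ^ i) a + (S.Φ ^ S.w) (val S.Φ T) + u ∉ S.powImage 1) :
    S.HasNAFWeightLE ((S.Φ ^ i) a + (S.Φ ^ S.w) (val S.Φ T) + u)
      (weight [a] + weight T + weight [u]) := by
  have haΛ : a ∈ S.Λ := (hS.isCarry_of_mem_insert ha).1
  have hTw : (S.Φ ^ S.w) (val S.Φ T) ∈ S.powImage 1 := pow_apply_mem_powImage_one hTΛ S.w_ne_zero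
  obtain ⟨δ, hδ, z, hz, hγeq⟩ :=
    exists_digit (add_mem (add_mem (pow_apply_mem haΛ _) (pow_apply_mem hTΛ _)) hu.1) hγ
  have hc_eq : (S.Φ ^ S.w) (z - val S.Φ T) = (S.Φ ^ i) a + u + -δ := by
    rw [map_sub, eq_sub_of_add_eq' hγeq.symm]
    abel
  have hc : S.IsCarry r (z - val S.Φ T) := hS.isCarry_of_pow_apply_eq (sub_mem hz hTΛ) hi
    (hS.norm_le_of_mem_insert ha) (hS.norm_le_of_isCarry hu)
    (by simpa using hS.norm_le_of_mem_insert (Set.mem_insert_of_mem _ hδ)) hc_eq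
  -- whichever of `a`, `u` vanishes, the other one is congruent to `δ`, so no carry is left
  have hc0 : ∀ x ∈ S.D, (S.Φ ^ S.w) (z - val S.Φ T) = x - δ → z - val S.Φ T = 0 := by
    intro x hx hxδ
    obtain rfl := eq_of_sub_mem_powImage hx hδ (mem_powImage.2 ⟨_, sub_mem hz hTΛ, hxδ⟩)
    exact (S.Φ ^ S.w).map_eq_zero_iff.1 (by rw [hxδ, sub_self])
  have hwt : 1 + weight [z - val S.Φ T] ≤ weight [a] + weight [u] := by
    rcases eq_or_ne a 0 with rfl | ha0
    · have huD := hS.mem_D_of_isCarry hu fun h => hγ (by simpa using add_mem hTw h)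
      rw [hc0 u huD (by simpa [sub_eq_add_neg] using hc_eq)]
      simp [ne_zero_of_mem_D huD]
    rcases eq_or_ne u 0 with rfl | hu0
    · obtain rfl : i = 0 := by
        by_contra hi0
        exact hγ (by simpa using add_mem (pow_apply_mem_powImage_one haΛ hi0) hTw)
      have haD : a ∈ S.D := (Set.mem_insert_iff.1 ha).resolve_left ha0
      rw [hc0 a haD (by simpa [sub_eq_add_neg] using hc_eq)]
      simp [ha0]
    have := weight_singleton_le_one (z - val S.Φ T)
    simp only [weight_singleton, if_neg ha0, if_neg hu0] at this ⊢
    omega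
  exact (((hT _ hc).of_eq_of_le (by abel) le_rfl).digit_add hδ).of_eq_of_le hγeq.symm (by omega)

theorem absorbsCarries (hS : S.IsTilingBased V q r R) {θ : List E} (hθ : IsNAF S.w S.D θ) :
    S.AbsorbsCarries r θ := by
  induction hn : θ.length using Nat.strong_induction_on generalizing θ with
  | _ n ih =>
  intro u hu
  obtain rfl | hne := eq_or_ne θ []
  · simpa using hS.hasNAFWeightLE_of_isCarry hu
  by_cases hγ : val S.Φ θ + u ∈ S.powImage 1
  · cases hθ with
    | nil => exact absurd rfl hne
    | zero_cons ht =>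
      simpa using hS.hasNAFWeightLE_zero_cons (ih _ (by simp [← hn]) ht rfl) (val_mem ht) hu
        (by simpa using hγ)
    | digit_cons hd hT =>
      rw [val_digit_block _ S.one_le_w] at hγ ⊢
      simpa [add_assoc, ne_zero_of_mem_D hd] using hS.hasNAFWeightLE_digit_block_add hd
        (ih _ (by simp [← hn]) hT rfl) (val_mem hT) hu hγ
  · obtain ⟨i, hi, a, ha, T, hT, hTn, hval, hwt⟩ := hθ.exists_window S.Φ S.one_le_w hne
    rw [hval] at hγ ⊢
    rw [hwt]
    exact hS.hasNAFWeightLE_of_notMem hi ha (ih _ (hn ▸ hTn) hT rfl) (val_mem hT) hu hγ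

theorem hasNAFWeightLE_val (hS : S.IsTilingBased V q r R) {ξ : List E}
    (hξ : ∀ a ∈ ξ, a ∈ insert 0 S.D) : S.HasNAFWeightLE (val S.Φ ξ) (weight ξ) := by
  induction ξ with
  | nil => exact hasNAFWeightLE_zero S 0
  | cons a ξ ih =>
    obtain ⟨σ, hσ, hval, hwt⟩ := ih fun b hb => hξ b (List.mem_cons_of_mem a hb)
    refine (hS.absorbsCarries hσ.zero_cons a (hS.isCarry_of_mem_insert (hξ a List.mem_cons_self))
      ).of_eq_of_le (by simp [hval, add_comm]) ?_
    simp only [weight_cons, weight_nil, add_zero, ↓reduceIte] at hwt ⊢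
    omega

theorem weight_le_weight (hS : S.IsTilingBased V q r R) {η ξ : List E}
    (hη : IsNAF S.w S.D η) (hξ : ∀ a ∈ ξ, a ∈ insert 0 S.D) (hval : val S.Φ η = val S.Φ ξ) :
    weight η ≤ weight ξ := by
  obtain ⟨σ, hσ, hσval, hσwt⟩ := hS.hasNAFWeightLE_val hξ
  exact (weight_eq_of_val_eq hη hσ (hval.trans hσval.symm)).trans_le hσwt

end IsTilingBased

end Tiling

end DigitSystem

section Bounds

variable [NormedAddCommGroup E] [NormedSpace ℝ E]

theorem norm_lt_one_of_lt_div {f : E →L[ℝ] E} {V : Set E} {r R : ℝ} (hr : 0 < r) (hR : 0 < R)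
    (hrV : {x : E | ‖x‖ ≤ r} ⊆ V) (hVR : V ⊆ {x : E | ‖x‖ ≤ R}) (hf : ‖f‖ < r / R) : ‖f‖ < 1 := by
  rcases subsingleton_or_nontrivial E with hE | hE
  · rw [ContinuousLinearMap.opNorm_subsingleton]
    exact one_pos
  · obtain ⟨x, hx⟩ := exists_norm_eq E hr.le
    exact hf.trans_le ((div_le_one hR).2 (hx ▸ hVR (hrV hx.le)))

theorem mul_add_two_mul_mul_lt {p q r R : ℝ} (hR : 0 < R) (h : p < 1 / 2 * (r / R - q)) :
    q * R + 2 * (p * R) < r := by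
  have h' := mul_lt_mul_of_pos_right h hR
  rw [show 1 / 2 * (r / R - q) * R = (r - q * R) / 2 by field_simp] at h'
  linarith

end Bounds

end WNAF

open WNAF

theorem wnaf_optimality_general
    {E : Type*} [NormedAddCommGroup E] [NormedSpace ℝ E] [FiniteDimensional ℝ E]
    {n : ℕ} (b : Module.Basis (Fin n) ℝ E)
    (Λ : Set E) (hΛ : Λ = ↑(Submodule.span ℤ (Set.range ⇑b)))
    (Φ : E ≃ₗ[ℝ] E) (hΦΛ : ∀ x ∈ Λ, Φ x ∈ Λ)
    (V : Set E)
    (hVdisj : ∀ z ∈ Λ, z ≠ 0 → ∀ x ∈ V, x - z ∈ V → x ∈ frontier V)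
    (q : ℝ) (hq : q = ‖LinearMap.toContinuousLinearMap (Φ.symm : E →ₗ[ℝ] E)‖)
    (r R : ℝ) (hr : 0 < r) (hR : 0 < R)
    (hrV : {x : E | ‖x‖ ≤ r} ⊆ V) (hVR : V ⊆ {x : E | ‖x‖ ≤ R})
    (hqrR : q < r / R)
    (w : ℕ) (hw : 1 ≤ w)
    (hbound : q ^ w < 1 / 2 * (r / R - q))
    (Dbul : Set E)
    (hDV : Dbul ⊆ {α ∈ Λ | (Φ ^ w).symm α ∈ V})
    (hDnot : ∀ δ ∈ Dbul, δ ∉ ⇑Φ '' Λ)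
    (hDrep : ∀ α ∈ Λ, α ∉ ⇑Φ '' Λ →
      ∃! δ, δ ∈ Dbul ∧ α - δ ∈ ⇑(Φ ^ w) '' Λ) :
    ∀ α ∈ Λ, ∀ (ℓ : ℕ) (η : Fin ℓ → E),
      (∀ j, η j ∈ insert (0 : E) Dbul) →
      (∀ i j : Fin ℓ, (i : ℕ) < (j : ℕ) → (j : ℕ) < (i : ℕ) + w → η i ≠ 0 → η j = 0) →
      (∑ j : Fin ℓ, (Φ ^ (j : ℕ)) (η j)) = α →
      ∀ (ℓ' : ℕ) (ξ : Fin ℓ' → E),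
        (∀ j, ξ j ∈ insert (0 : E) Dbul) →
        (∑ j : Fin ℓ', (Φ ^ (j : ℕ)) (ξ j)) = α →
        (Finset.univ.filter (fun j : Fin ℓ => η j ≠ 0)).card ≤
          (Finset.univ.filter (fun j : Fin ℓ' => ξ j ≠ 0)).card := by
  intro α _ ℓ η hη hηnaf hηval ℓ' ξ hξ hξval
  subst hΛ
  let S : DigitSystem ℝ E :=
    { Φ, w, Λ := (Submodule.span ℤ (Set.range b)).toAddSubgroup, D := Dbul, one_le_w := hw,
      map_mem := hΦΛ, D_subset := fun d hd => (hDV hd).1, notMem_image := hDnot,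
      existsUnique_digit := hDrep }
  have hS : S.IsTilingBased V q r R :=
    { discreteTopology := inferInstance
      norm_symm_le := fun x =>
        hq ▸ (LinearMap.toContinuousLinearMap (Φ.symm : E →ₗ[ℝ] E)).le_opNorm x
      q_nonneg := hq ▸ norm_nonneg _
      q_lt_one := hq ▸ norm_lt_one_of_lt_div hr hR hrV hVR (hq ▸ hqrR)
      r_pos := hr
      closedBall_subset := hrV
      subset_closedBall := hVR
      mem_frontier := hVdisj
      symm_pow_mem := fun d hd => (hDV hd).2
      carry_bound := mul_add_two_mul_mul_lt hR hbound }
  obtain ⟨η', hη', hη'val, hη'wt⟩ := exists_isNAF_ofFn Φ hw η hη hηnaf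
  rw [← hη'wt, ← weight_ofFn]
  exact hS.weight_le_weight hη' (by simpa [List.mem_ofFn] using hξ)
    (by rw [hη'val, val_ofFn, hηval, hξval])

/-- Theorem 6.5: under the tiling and norm conditions, if the tiling-based
digit set `D` is a `w`-NADS, then the `D`-`w`-NAF expansion of each lattice
element is optimal, i.e. its Hamming weight is minimal among all expansions of
the same element over the digit set `D`. -/
theorem wnaf_optimality
    {E : Type*} [NormedAddCommGroup E] [NormedSpace ℝ E] [FiniteDimensional ℝ E]
    {n : ℕ} (b : Module.Basis (Fin n) ℝ E)
    (Λ : Set E) (hΛ : Λ = ↑(Submodule.span ℤ (Set.range ⇑b)))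
    (Φ : E ≃ₗ[ℝ] E) (hΦΛ : ∀ x ∈ Λ, Φ x ∈ Λ)
    (hexp : ∀ lam : ℂ,
      (Polynomial.map (algebraMap ℝ ℂ) (LinearMap.charpoly (Φ : E →ₗ[ℝ] E))).IsRoot lam →
      1 < ‖lam‖)
    (V : Set E)
    (hVcover : ∀ x : E, ∃ z ∈ Λ, x - z ∈ V)
    (hVdisj : ∀ z ∈ Λ, z ≠ 0 → ∀ x ∈ V, x - z ∈ V → x ∈ frontier V)
    (hVΦ : V ⊆ ⇑Φ '' V) (hVsymm : V = -V)
    (q : ℝ) (hq : q = ‖LinearMap.toContinuousLinearMap (Φ.symm : E →ₗ[ℝ] E)‖)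
    (r R : ℝ) (hr : 0 < r) (hR : 0 < R)
    (hrV : {x : E | ‖x‖ ≤ r} ⊆ V) (hVR : V ⊆ {x : E | ‖x‖ ≤ R})
    (hqrR : q < r / R)
    (w : ℕ) (hw : 1 ≤ w)
    (hbound : q ^ w < 1 / 2 * (r / R - q))
    (Dbul : Set E)
    (hDV : Dbul ⊆ {α ∈ Λ | (Φ ^ w).symm α ∈ V})
    (hDnot : ∀ δ ∈ Dbul, δ ∉ ⇑Φ '' Λ)
    (hDrep : ∀ α ∈ Λ, α ∉ ⇑Φ '' Λ →
      ∃! δ, δ ∈ Dbul ∧ α - δ ∈ ⇑(Φ ^ w) '' Λ)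
    (hNADS : ∀ α ∈ Λ, ∃ (ℓ : ℕ) (η : Fin ℓ → E),
      (∀ j, η j ∈ insert (0 : E) Dbul) ∧
      (∀ i j : Fin ℓ, (i : ℕ) < (j : ℕ) → (j : ℕ) < (i : ℕ) + w → η i ≠ 0 → η j = 0) ∧
      (∑ j : Fin ℓ, (Φ ^ (j : ℕ)) (η j)) = α) :
    ∀ α ∈ Λ, ∀ (ℓ : ℕ) (η : Fin ℓ → E),
      (∀ j, η j ∈ insert (0 : E) Dbul) →
      (∀ i j : Fin ℓ, (i : ℕ) < (j : ℕ) → (j : ℕ) < (i : ℕ) + w → η i ≠ 0 → η j = 0) →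
      (∑ j : Fin ℓ, (Φ ^ (j : ℕ)) (η j)) = α →
      ∀ (ℓ' : ℕ) (ξ : Fin ℓ' → E),
        (∀ j, ξ j ∈ insert (0 : E) Dbul) →
        (∑ j : Fin ℓ', (Φ ^ (j : ℕ)) (ξ j)) = α →
        (Finset.univ.filter (fun j : Fin ℓ => η j ≠ 0)).card ≤
          (Finset.univ.filter (fun j : Fin ℓ' => ξ j ≠ 0)).card :=
  wnaf_optimality_general b Λ hΛ Φ hΦΛ V hVdisj q hq r R hr hR hrV hVR hqrR w hw hbound Dbul hDV
    hDnot hDrep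
end

section
/- Let A be an abelian group, Φ an injective endomorphism, w ≥ 1, and D = D• ∪ {0} a pre-w-NADS digit set, with d and T defined as usual (d(α) = 0 if α ∈ Φ(A), else d(α) ∈ D• with d(α) ≡ α mod Φ^w(A); T(α) = Φ^{−1}(α − d(α))). If β ∈ A satisfies d(β) ≠ 0, then d(T^j(β)) = 0 for all 1 ≤ j ≤ w − 1; equivalently, T^j(β) ∈ Φ(A) for 1 ≤ j ≤ w − 1 and T^w(β) = Φ^{−w}(β − d(β)). -/
/-- If the digit of `β` is non-zero, then the next `w - 1` digits produced by
iterating `T` vanish: `T^[j] β ∈ Φ(A)` and `d (T^[j] β) = 0` for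
`1 ≤ j ≤ w - 1`, and `Φ^w (T^[w] β) = β - d β`
(i.e. `T^[w] β = Φ^{-w} (β - d β)`). -/
theorem wnaf_digit_window {A : Type*} [AddCommGroup A] (Φ : AddMonoid.End A)
    (hΦ : Function.Injective Φ) (w : ℕ) (hw : 1 ≤ w)
    (Dbul : Set A)
    (hDnot : ∀ δ ∈ Dbul, δ ∉ Set.range ⇑Φ)
    (hDrep : ∀ α : A, α ∉ Set.range ⇑Φ →
      ∃! δ, δ ∈ Dbul ∧ α - δ ∈ Set.range ⇑(Φ ^ w))
    (d : A → A)
    (hd0 : ∀ α ∈ Set.range ⇑Φ, d α = 0)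
    (hd : ∀ α : A, α ∉ Set.range ⇑Φ → d α ∈ Dbul ∧ α - d α ∈ Set.range ⇑(Φ ^ w))
    (T : A → A) (hT : ∀ α, Φ (T α) = α - d α)
    (β : A) (hβ : d β ≠ 0) :
    (∀ j : ℕ, 1 ≤ j → j ≤ w - 1 → T^[j] β ∈ Set.range ⇑Φ ∧ d (T^[j] β) = 0) ∧
      (Φ ^ w) (T^[w] β) = β - d β := by
  have hβnr : β ∉ Set.range ⇑Φ := fun h => hβ (hd0 β h)
  obtain ⟨_, γ, hγ⟩ := hd β hβnr
  -- key: T^[j] β = Φ^(w-j) γ for 1 ≤ j ≤ w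
  have key : ∀ j : ℕ, 1 ≤ j → j ≤ w → T^[j] β = (Φ ^ (w - j)) γ := by
    intro j hj1 hjw
    induction j with
    | zero => omega
    | succ k ih =>
      rcases Nat.eq_zero_or_pos k with hk | hk
      · subst hk
        apply hΦ
        rw [Function.iterate_one, hT, ← hγ]
        conv_lhs => rw [show w = 1 + (w - 1) by omega, pow_add, pow_one]
        rfl
      · have hkw : k ≤ w := by omega
        have hk' := ih hk (by omega)
        apply hΦ
        rw [Function.iterate_succ_apply', hT, hk']
        have hdz : d ((Φ ^ (w - k)) γ) = 0 := by
          apply hd0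
          have : w - k = 1 + (w - k - 1) := by omega
          rw [this, pow_add, pow_one]
          exact ⟨(Φ ^ (w - k - 1)) γ, rfl⟩
        rw [hdz, sub_zero]
        have : w - k = 1 + (w - (k + 1)) := by omega
        rw [this, pow_add, pow_one]
        rfl
  constructor
  · intro j hj1 hjw
    have h := key j hj1 (by omega)
    have hr : T^[j] β ∈ Set.range ⇑Φ := by
      rw [h]
      have : w - j = 1 + (w - j - 1) := by omega
      rw [this, pow_add, pow_one]
      exact ⟨(Φ ^ (w - j - 1)) γ, rfl⟩
    exact ⟨hr, hd0 _ hr⟩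
  · rw [key w hw le_rfl, Nat.sub_self, pow_zero]
    simpa using hγ
end

section
/- Let A be an abelian group, Φ an injective endomorphism, w ≥ 1, D a pre-w-NADS digit set, and T the associated map. For α ∈ A and k ≥ 0, if the word d(T^{k−1}(α))…d(T(α))d(α) is formed from the first k digits, then it is automatically a D-w-NAF (satisfies the syntactic w-NAF condition), and α = Φ^k(T^k(α)) + ∑_{j=0}^{k−1} Φ^j(d(T^j(α))). -/
/-- The word formed by the first `k` digits `d (T^[j] α)`, `0 ≤ j < k`, is
automatically a `D`-`w`-NAF, and
`α = Φ^k (T^[k] α) + ∑_{j<k} Φ^j (d (T^[j] α))`. -/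
theorem wnaf_digits_from_T {A : Type*} [AddCommGroup A] (Φ : AddMonoid.End A)
    (hΦ : Function.Injective Φ) (w : ℕ) (hw : 1 ≤ w)
    (Dbul : Set A)
    (hDnot : ∀ δ ∈ Dbul, δ ∉ Set.range ⇑Φ)
    (hDrep : ∀ α : A, α ∉ Set.range ⇑Φ →
      ∃! δ, δ ∈ Dbul ∧ α - δ ∈ Set.range ⇑(Φ ^ w))
    (d : A → A)
    (hd0 : ∀ α ∈ Set.range ⇑Φ, d α = 0)
    (hd : ∀ α : A, α ∉ Set.range ⇑Φ → d α ∈ Dbul ∧ α - d α ∈ Set.range ⇑(Φ ^ w))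
    (T : A → A) (hT : ∀ α, Φ (T α) = α - d α)
    (α : A) (k : ℕ) :
    (∀ i j : ℕ, i < j → j < k → j < i + w →
        d (T^[i] α) ≠ 0 → d (T^[j] α) = 0) ∧
      α = (Φ ^ k) (T^[k] α) + ∑ j ∈ Finset.range k, (Φ ^ j) (d (T^[j] α)) := by
  have key : ∀ β : A, d β ≠ 0 → ∀ m : ℕ, 1 ≤ m → m < w →
      ∃ γ, T^[m] β = (Φ ^ (w - m)) γ := by
    intro β hβ m
    induction m with
    | zero => intro h; omega
    | succ n ih =>
      intro _ hlt
      by_cases hn : n = 0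
      · subst hn
        have hβr : β ∉ Set.range ⇑Φ := fun hr => hβ (hd0 β hr)
        obtain ⟨γ, hγ⟩ := (hd β hβr).2
        refine ⟨γ, hΦ ?_⟩
        rw [Function.iterate_one, hT β, ← hγ]
        have : Φ ^ w = Φ * Φ ^ (w - 1) := by
          conv_lhs => rw [show w = 1 + (w - 1) by omega, pow_add, pow_one]
        rw [this]
        rfl
      · obtain ⟨γ, hγ⟩ := ih (by omega) (by omega)
        have hwn : w - n = (w - (n + 1)) + 1 := by omega
        have hmem : T^[n] β ∈ Set.range ⇑Φ := by
          refine ⟨(Φ ^ (w - (n + 1))) γ, ?_⟩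
          rw [hγ, hwn, pow_succ']
          rfl
        refine ⟨γ, hΦ ?_⟩
        rw [Function.iterate_succ_apply', hT, hd0 _ hmem, sub_zero, hγ, hwn,
          pow_succ']
        rfl
  constructor
  · intro i j hij hjk hjw hne
    obtain ⟨γ, hγ⟩ := key (T^[i] α) hne (j - i) (by omega) (by omega)
    rw [← Function.iterate_add_apply, Nat.sub_add_cancel hij.le] at hγ
    apply hd0
    refine ⟨(Φ ^ (w - (j - i) - 1)) γ, ?_⟩
    rw [hγ, show w - (j - i) = (w - (j - i) - 1) + 1 by omega, pow_succ']
    rfl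
  · induction k with
    | zero => simp
    | succ n ih =>
      rw [Finset.sum_range_succ, Function.iterate_succ_apply']
      have h1 : (Φ ^ (n + 1)) (T (T^[n] α)) = (Φ ^ n) (Φ (T (T^[n] α))) := by
        rw [pow_succ]; rfl
      rw [h1, hT, map_sub]
      conv_lhs => rw [ih]
      abel
end
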